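/- arXiv:1603.06087 — 6 statements merged into one kernel-verified Lean document; each statement's English description precedes it below -/
import Mathlib

section
/- Let p, q be integers with |p| ≥ 2 and |q| = 2, let a be any real number, and let m, n be integers with |p| + 1 < m < 2|p| - 1 and 2n - 1 ≥ |q| (i.e. n ≥ (|q|+1)/2). Then the self-affine set T(A, D) is a connected subset of ℝ². -/
open Matrix

/-- The expanding matrix with rows `(p, 0)` and `(-a, q)`. -/
noncomputable def matA (p q : ℤ) (a : ℝ) : Matrix (Fin 2) (Fin 2) ℝ :=
  !![(p : ℝ), 0; -a, (q : ℝ)]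

/-- The product digit set `{0,…,m-1} × {0,…,n-1}` viewed inside `ℝ²`. -/
def digitSet (m n : ℤ) : Set (Fin 2 → ℝ) :=
  {v | ∃ i j : ℤ, 0 ≤ i ∧ i ≤ m - 1 ∧ 0 ≤ j ∧ j ≤ n - 1 ∧ v = ![(i : ℝ), (j : ℝ)]}

/-- `T(A, D) = { ∑_{k≥1} A^{-k} d_k : d_k ∈ D }`. -/
noncomputable def selfAffineSet (A : Matrix (Fin 2) (Fin 2) ℝ) (D : Set (Fin 2 → ℝ)) :
    Set (Fin 2 → ℝ) :=
  {x | ∃ d : ℕ → (Fin 2 → ℝ), (∀ k, d k ∈ D) ∧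
    HasSum (fun k => (A⁻¹ ^ (k + 1)).mulVec (d k)) x}

/-
The pieces `A⁻¹ (T + d)`, `d ∈ D`, cover `T`, and the pieces of `d` and `d'` meet as soon as
`d' - d ∈ T - T`. If this adjacency relation connects all of `D`, iterating the cover joins any two
points of `T` by a chain whose consecutive points differ by an element of `A⁻ᵏ (T - T)`. Since
`A⁻ᵏ → 0` these are `ε`-chains for every `ε > 0`, and a compact set that is `ε`-chain connected for
every `ε` is connected.

For `A = !![p, 0; -a, q]` with `q = 2s`, `s = ±1`, the lower triangular powers give
`A⁻ᵏ = !![p⁻ᵏ, 0; c (p⁻ᵏ - q⁻ᵏ), q⁻ᵏ]` with `c = a / (q - p)`, so every horizontal and vertical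
edge of the rectangle `D` is an adjacency: `(0, 1) = ∑ A⁻ᵏ⁻¹ (0, sᵏ⁺¹)`, and
`(1, 0) = ∑ A⁻ᵏ⁻¹ (εₖ, 0)` where `ε = (p + s, s²(1 - sp), s³(1 - sp), …)` expands `1` both in
base `p` and in base `q`, so that the off-diagonal term `c (∑ p⁻ᵏ⁻¹ εₖ - ∑ q⁻ᵏ⁻¹ εₖ)` vanishes.
As `|εₖ| ≤ |p| + 1 ≤ m - 1`, all these digits are differences of digits of `D`.
-/

open Relation Set
open scoped Pointwise

theorem IsCompact.isPreconnected_of_forall_reflTransGen {X : Type*} [PseudoMetricSpace X]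
    {K : Set X} (hK : IsCompact K)
    (h : ∀ ε > 0, ∀ x ∈ K, ∀ y ∈ K, ReflTransGen (fun a b => b ∈ K ∧ dist a b < ε) x y) :
    IsPreconnected K := by
  rintro U V hU hV hKUV ⟨x, hxK, hxU⟩ ⟨y, hyK, hyV⟩
  by_contra hdisj
  have hsU : K \ V ⊆ U := fun z hz => (hKUV hz.1).resolve_right hz.2
  obtain ⟨δ, hδ, hthick⟩ := (hK.diff hV).exists_thickening_subset_open hU hsU
  have hstay : ∀ z, ReflTransGen (fun a b => b ∈ K ∧ dist a b < δ) x z → z ∈ K \ V := by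
    intro z hz
    induction hz with
    | refl => exact ⟨hxK, fun hxV => hdisj ⟨x, hxK, hxU, hxV⟩⟩
    | tail _ hbc ih =>
      have hcU : _ ∈ U :=
        hthick (Metric.mem_thickening_iff.2 ⟨_, ih, by rw [dist_comm]; exact hbc.2⟩)
      exact ⟨hbc.1, fun hcV => hdisj ⟨_, hbc.1, hcU, hcV⟩⟩
  exact (hstay y (h δ hδ x hxK y hyK)).2 hyV

theorem reflTransGen_iterate_sub_mem {E : Type*} [AddCommGroup E] {L : E →+ E} {T D : Set E}
    (hmaps : ∀ d ∈ D, ∀ x ∈ T, L (x + d) ∈ T)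
    (hcover : ∀ x ∈ T, ∃ d ∈ D, ∃ y ∈ T, x = L (y + d))
    (hD : ∀ d ∈ D, ∀ d' ∈ D, ReflTransGen (fun d d' => d' ∈ D ∧ d' - d ∈ T - T) d d') (k : ℕ) :
    ∀ x ∈ T, ∀ y ∈ T, ReflTransGen (fun x y => y ∈ T ∧ x - y ∈ L^[k] '' (T - T)) x y := by
  induction k with
  | zero => exact fun x hx y hy => .single ⟨hy, x - y, sub_mem_sub hx hy, rfl⟩
  | succ k ih =>
    have hpiece : ∀ d ∈ D, ∀ x ∈ T, ∀ y ∈ T, ReflTransGen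
        (fun x y => y ∈ T ∧ x - y ∈ L^[k + 1] '' (T - T)) (L (x + d)) (L (y + d)) := by
      intro d hd x hx y hy
      refine ReflTransGen.lift (fun z => L (z + d)) ?_ _ _ (ih x hx y hy)
      rintro a b ⟨hb, w, hw, hab⟩
      refine ⟨hmaps d hd b hb, w, hw, ?_⟩
      rw [Function.iterate_succ_apply', hab, ← map_sub, add_sub_add_right_eq_sub]
    have hdigits : ∀ d ∈ D, ∀ x ∈ T, ∀ d', ReflTransGen (fun d d' => d' ∈ D ∧ d' - d ∈ T - T) d d' →
        ∀ y ∈ T, ReflTransGen (fun x y => y ∈ T ∧ x - y ∈ L^[k + 1] '' (T - T))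
          (L (x + d)) (L (y + d')) := by
      intro d hd x hx d' hdd'
      induction hdd' with
      | refl => exact hpiece d hd x hx
      | @tail b c _ hbc ihb =>
        obtain ⟨hc, z, hz, z', hz', hzz'⟩ := hbc
        have hjoin : z + b = z' + c := by
          rw [← sub_add_cancel z z', show z - z' = c - b from hzz']; abel
        intro y hy
        exact (ihb z hz).trans (hjoin ▸ hpiece c hc z' hz' y hy)
    intro x hx y hy
    obtain ⟨d, hd, x', hx', rfl⟩ := hcover x hx
    obtain ⟨d', hd', y', hy', rfl⟩ := hcover y hy
    exact hdigits d hd x' hx' d' (hD d hd d' hd') y' hy'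

section SelfAffine

variable {A : Matrix (Fin 2) (Fin 2) ℝ} {D : Set (Fin 2 → ℝ)}

theorem inv_mulVec_add_mem_selfAffineSet {d x : Fin 2 → ℝ} (hd : d ∈ D)
    (hx : x ∈ selfAffineSet A D) : A⁻¹ *ᵥ (x + d) ∈ selfAffineSet A D := by
  obtain ⟨σ, hσ, hs⟩ := hx
  refine ⟨fun k => Nat.casesOn k d σ, fun k => by cases k <;> simp [hd, hσ], ?_⟩
  refine (hasSum_nat_add_iff' 1).1 ?_
  have h := hs.map (A⁻¹).mulVecLin (A⁻¹).mulVecLin.continuous_of_finiteDimensional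
  simp only [Function.comp_def, Matrix.mulVecLin_apply, Matrix.mulVec_mulVec, ← pow_succ'] at h
  simpa [Matrix.mulVec_add] using h

theorem exists_eq_inv_mulVec_add_of_mem_selfAffineSet (hdet : IsUnit A.det) {x : Fin 2 → ℝ}
    (hx : x ∈ selfAffineSet A D) :
    ∃ d ∈ D, ∃ y ∈ selfAffineSet A D, x = A⁻¹ *ᵥ (y + d) := by
  obtain ⟨σ, hσ, hs⟩ := hx
  refine ⟨σ 0, hσ 0, A *ᵥ (x - A⁻¹ *ᵥ σ 0), ⟨fun k => σ (k + 1), fun k => hσ _, ?_⟩, ?_⟩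
  · have hterm : ∀ k, A *ᵥ (A⁻¹ ^ (k + 1 + 1) *ᵥ σ (k + 1)) = A⁻¹ ^ (k + 1) *ᵥ σ (k + 1) := by
      intro k
      rw [Matrix.mulVec_mulVec, pow_succ' _ (k + 1), ← mul_assoc, Matrix.mul_nonsing_inv _ hdet,
        one_mul]
    have h := ((hasSum_nat_add_iff' 1).2 hs).map A.mulVecLin
      A.mulVecLin.continuous_of_finiteDimensional
    simpa only [Function.comp_def, Matrix.mulVecLin_apply, hterm, Finset.sum_range_one, zero_add,
      pow_one] using h
  · rw [Matrix.mulVec_add, Matrix.mulVec_mulVec, Matrix.nonsing_inv_mul _ hdet, Matrix.one_mulVec,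
      sub_add_cancel]

theorem summable_inv_pow_succ_mulVec {β : ℕ → ℝ} (hβ₀ : ∀ k, 0 ≤ β k) (hβ : Summable β)
    (hA : ∀ k v, ‖A⁻¹ ^ k *ᵥ v‖ ≤ β k * ‖v‖) {d : ℕ → Fin 2 → ℝ} {M : ℝ}
    (hd : ∀ k, ‖d k‖ ≤ M) : Summable fun k => A⁻¹ ^ (k + 1) *ᵥ d k :=
  .of_norm_bounded (((summable_nat_add_iff 1).2 hβ).mul_right M) fun k =>
    (hA _ _).trans (mul_le_mul_of_nonneg_left (hd k) (hβ₀ _))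

theorem selfAffineSet_eq_range {β : ℕ → ℝ} (hβ₀ : ∀ k, 0 ≤ β k) (hβ : Summable β)
    (hA : ∀ k v, ‖A⁻¹ ^ k *ᵥ v‖ ≤ β k * ‖v‖) (hD : Bornology.IsBounded D) :
    selfAffineSet A D = range fun σ : ℕ → D => ∑' k, A⁻¹ ^ (k + 1) *ᵥ (σ k : Fin 2 → ℝ) := by
  obtain ⟨M, hM⟩ := isBounded_iff_forall_norm_le.1 hD
  ext x
  constructor
  · rintro ⟨d, hd, hs⟩
    exact ⟨fun k => ⟨d k, hd k⟩, hs.tsum_eq⟩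
  · rintro ⟨σ, rfl⟩
    exact ⟨fun k => σ k, fun k => (σ k).2,
      (summable_inv_pow_succ_mulVec hβ₀ hβ hA fun k => hM _ (σ k).2).hasSum⟩

theorem isCompact_selfAffineSet {β : ℕ → ℝ} (hβ₀ : ∀ k, 0 ≤ β k) (hβ : Summable β)
    (hA : ∀ k v, ‖A⁻¹ ^ k *ᵥ v‖ ≤ β k * ‖v‖) (hD : D.Finite) :
    IsCompact (selfAffineSet A D) := by
  obtain ⟨M, hM⟩ := isBounded_iff_forall_norm_le.1 hD.isBounded
  have : Finite D := hD.to_subtype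
  rw [selfAffineSet_eq_range hβ₀ hβ hA hD.isBounded]
  refine isCompact_range (continuous_tsum (fun k => ?_)
    (((summable_nat_add_iff 1).2 hβ).mul_right M) fun k σ =>
      (hA _ _).trans (mul_le_mul_of_nonneg_left (hM _ (σ k).2) (hβ₀ _)))
  exact continuous_const.matrix_mulVec (continuous_subtype_val.comp (continuous_apply k))

theorem selfAffineSet_nonempty {β : ℕ → ℝ} (hβ₀ : ∀ k, 0 ≤ β k) (hβ : Summable β)
    (hA : ∀ k v, ‖A⁻¹ ^ k *ᵥ v‖ ≤ β k * ‖v‖) (hD : Bornology.IsBounded D) (hD₀ : D.Nonempty) :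
    (selfAffineSet A D).Nonempty := by
  have : Nonempty D := hD₀.to_subtype
  rw [selfAffineSet_eq_range hβ₀ hβ hA hD]
  exact range_nonempty _

theorem mem_selfAffineSet_sub_of_hasSum {β : ℕ → ℝ} (hβ₀ : ∀ k, 0 ≤ β k) (hβ : Summable β)
    (hA : ∀ k v, ‖A⁻¹ ^ k *ᵥ v‖ ≤ β k * ‖v‖) (hD : Bornology.IsBounded D)
    {e : ℕ → Fin 2 → ℝ} (he : ∀ k, e k ∈ D - D) {v : Fin 2 → ℝ}
    (hv : HasSum (fun k => A⁻¹ ^ (k + 1) *ᵥ e k) v) :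
    v ∈ selfAffineSet A D - selfAffineSet A D := by
  obtain ⟨M, hM⟩ := isBounded_iff_forall_norm_le.1 hD
  choose d hd d' hd' hdd' using fun k => mem_sub.1 (he k)
  have hs := summable_inv_pow_succ_mulVec hβ₀ hβ hA fun k => hM _ (hd k)
  have hs' := summable_inv_pow_succ_mulVec hβ₀ hβ hA fun k => hM _ (hd' k)
  refine mem_sub.2 ⟨_, ⟨d, hd, hs.hasSum⟩, _, ⟨d', hd', hs'.hasSum⟩, ?_⟩
  refine (hs.hasSum.sub hs'.hasSum).unique ?_
  simpa only [← Matrix.mulVec_sub, hdd'] using hv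

theorem isConnected_selfAffineSet (hdet : IsUnit A.det) {β : ℕ → ℝ} (hβ₀ : ∀ k, 0 ≤ β k)
    (hβ : Summable β) (hA : ∀ k v, ‖A⁻¹ ^ k *ᵥ v‖ ≤ β k * ‖v‖) (hD : D.Finite) (hD₀ : D.Nonempty)
    (hadj : ∀ d ∈ D, ∀ d' ∈ D, ReflTransGen
      (fun d d' => d' ∈ D ∧ d' - d ∈ selfAffineSet A D - selfAffineSet A D) d d') :
    IsConnected (selfAffineSet A D) := by
  have hT := isCompact_selfAffineSet hβ₀ hβ hA hD
  refine ⟨selfAffineSet_nonempty hβ₀ hβ hA hD.isBounded hD₀,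
    hT.isPreconnected_of_forall_reflTransGen fun ε hε x hx y hy => ?_⟩
  obtain ⟨R, hR⟩ := isBounded_iff_forall_norm_le.1 hT.isBounded
  obtain ⟨k, hk⟩ : ∃ k, β k * (2 * R) < ε :=
    ((hβ.tendsto_atTop_zero.mul_const _).eventually (gt_mem_nhds (by simpa using hε))).exists
  let L : (Fin 2 → ℝ) →+ (Fin 2 → ℝ) := (A⁻¹).mulVecLin.toAddMonoidHom
  have hL : ∀ j w, L^[j] w = A⁻¹ ^ j *ᵥ w := by
    intro j w
    induction j with
    | zero => simp
    | succ j ih =>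
      rw [Function.iterate_succ_apply', ih, pow_succ', ← Matrix.mulVec_mulVec]
      rfl
  refine ReflTransGen.mono ?_ _ _ (reflTransGen_iterate_sub_mem (L := L)
    (fun d hd x hx => inv_mulVec_add_mem_selfAffineSet hd hx)
    (fun x hx => exists_eq_inv_mulVec_add_of_mem_selfAffineSet hdet hx) hadj k x hx y hy)
  rintro a b ⟨hb, w, hw, hab⟩
  obtain ⟨u, hu, u', hu', rfl⟩ := mem_sub.1 hw
  refine ⟨hb, ?_⟩
  calc dist a b = ‖A⁻¹ ^ k *ᵥ (u - u')‖ := by rw [dist_eq_norm, ← hab, hL]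
    _ ≤ β k * (2 * R) := (hA _ _).trans <| mul_le_mul_of_nonneg_left
        ((norm_sub_le _ _).trans (by linarith [hR u hu, hR u' hu'])) (hβ₀ k)
    _ < ε := hk

end SelfAffine

theorem lowerTriangular_pow (x y c : ℝ) (k : ℕ) :
    !![x, 0; c * (x - y), y] ^ k = !![x ^ k, 0; c * (x ^ k - y ^ k), y ^ k] := by
  induction k with
  | zero => simp [Matrix.one_fin_two]
  | succ k ih =>
    rw [pow_succ', ih]
    ext i j
    fin_cases i <;> fin_cases j <;>
      simp only [Matrix.mul_apply, of_apply, cons_val', cons_val_fin_one, cons_val_zero,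
      cons_val_one, Fin.sum_univ_two, mul_zero, zero_mul, add_zero, zero_add, Fin.isValue,
      Fin.zero_eta, Fin.mk_one] <;> ring

theorem norm_mulVec_fin_two_le {a b c d M : ℝ} (h₀ : |a| + |b| ≤ M) (h₁ : |c| + |d| ≤ M)
    (v : Fin 2 → ℝ) : ‖!![a, b; c, d] *ᵥ v‖ ≤ M * ‖v‖ := by
  have hv : ∀ i, |v i| ≤ ‖v‖ := fun i => by simpa using norm_le_pi_norm v i
  have hrow : ∀ x y : ℝ, |x| + |y| ≤ M → |x * v 0 + y * v 1| ≤ M * ‖v‖ := fun x y h =>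
    calc |x * v 0 + y * v 1| ≤ |x| * |v 0| + |y| * |v 1| := by
          rw [← abs_mul, ← abs_mul]; exact abs_add_le _ _
      _ ≤ |x| * ‖v‖ + |y| * ‖v‖ := by gcongr <;> exact hv _
      _ ≤ M * ‖v‖ := by rw [← add_mul]; exact mul_le_mul_of_nonneg_right h (norm_nonneg v)
  have hM : 0 ≤ M * ‖v‖ :=
    le_trans (by positivity) (mul_le_mul_of_nonneg_right h₀ (norm_nonneg v))
  refine (pi_norm_le_iff_of_nonneg hM).2 fun i => ?_
  fin_cases i
  · simpa [Matrix.mulVec, dotProduct, Fin.sum_univ_two] using hrow a b h₀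
  · simpa [Matrix.mulVec, dotProduct, Fin.sum_univ_two] using hrow c d h₁

section matA

variable {p q : ℤ} {a : ℝ}

theorem isUnit_det_matA (hp : p ≠ 0) (hq : q ≠ 0) : IsUnit (matA p q a).det := by
  simp [matA, Matrix.det_fin_two_of, hp, hq]

theorem inv_matA (hp : p ≠ 0) (hq : q ≠ 0) (hpq : p ≠ q) :
    (matA p q a)⁻¹ = !![(p : ℝ)⁻¹, 0; a / (q - p) * ((p : ℝ)⁻¹ - (q : ℝ)⁻¹), (q : ℝ)⁻¹] := by
  have hqp : (q : ℝ) - p ≠ 0 := sub_ne_zero.2 (by exact_mod_cast hpq.symm)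
  refine Matrix.inv_eq_right_inv ?_
  ext i j
  fin_cases i <;> fin_cases j <;>
    simp only [matA, Matrix.mul_apply, of_apply, cons_val', cons_val_fin_one, cons_val_zero,
      cons_val_one, Fin.sum_univ_two, mul_zero, zero_mul, add_zero, zero_add, neg_mul, Fin.isValue,
      Fin.zero_eta, Fin.mk_one, one_apply_eq, one_apply_ne, ne_eq, zero_ne_one, one_ne_zero,
      not_false_eq_true] <;>
    field_simp; ring

theorem inv_matA_pow (hp : p ≠ 0) (hq : q ≠ 0) (hpq : p ≠ q) (k : ℕ) :
    (matA p q a)⁻¹ ^ k =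
      !![(p : ℝ)⁻¹ ^ k, 0; a / (q - p) * ((p : ℝ)⁻¹ ^ k - (q : ℝ)⁻¹ ^ k), (q : ℝ)⁻¹ ^ k] := by
  rw [inv_matA hp hq hpq, lowerTriangular_pow]

theorem abs_inv_pow_le_half_pow {x : ℝ} (hx : 2 ≤ |x|) (k : ℕ) : |x⁻¹ ^ k| ≤ (1 / 2) ^ k := by
  rw [abs_pow, abs_inv, ← one_div]
  exact pow_le_pow_left₀ (by positivity) (one_div_le_one_div_of_le two_pos hx) k

theorem norm_inv_matA_pow_mulVec_le (hp : 2 ≤ |p|) (hq : 2 ≤ |q|) (hpq : p ≠ q) (k : ℕ)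
    (v : Fin 2 → ℝ) :
    ‖(matA p q a)⁻¹ ^ k *ᵥ v‖ ≤ (1 + 2 * |a / (q - p)|) * (1 / 2) ^ k * ‖v‖ := by
  have hp' : 2 ≤ |(p : ℝ)| := by exact_mod_cast hp
  have hq' : 2 ≤ |(q : ℝ)| := by exact_mod_cast hq
  have hP := abs_inv_pow_le_half_pow hp' k
  have hQ := abs_inv_pow_le_half_pow hq' k
  have hc := abs_nonneg (a / (q - p))
  rw [inv_matA_pow (abs_pos.1 (two_pos.trans_le hp)) (abs_pos.1 (two_pos.trans_le hq)) hpq]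
  refine norm_mulVec_fin_two_le ?_ ?_ v
  · rw [abs_zero, add_zero]
    nlinarith [pow_nonneg (by norm_num : (0 : ℝ) ≤ 1 / 2) k]
  · calc |a / (q - p) * ((p : ℝ)⁻¹ ^ k - (q : ℝ)⁻¹ ^ k)| + |(q : ℝ)⁻¹ ^ k|
        ≤ |a / (q - p)| * (|(p : ℝ)⁻¹ ^ k| + |(q : ℝ)⁻¹ ^ k|) + |(q : ℝ)⁻¹ ^ k| := by
          rw [abs_mul]; gcongr; exact abs_sub _ _
      _ ≤ |a / (q - p)| * ((1 / 2) ^ k + (1 / 2) ^ k) + (1 / 2) ^ k := by gcongr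
      _ = (1 + 2 * |a / (q - p)|) * (1 / 2) ^ k := by ring

theorem hasSum_inv_matA_pow_succ_mulVec (hp : p ≠ 0) (hq : q ≠ 0) (hpq : p ≠ q) {x y : ℕ → ℝ}
    {X Y Z : ℝ} (hX : HasSum (fun k => (p : ℝ)⁻¹ ^ (k + 1) * x k) X)
    (hY : HasSum (fun k => (q : ℝ)⁻¹ ^ (k + 1) * x k) Y)
    (hZ : HasSum (fun k => (q : ℝ)⁻¹ ^ (k + 1) * y k) Z) :
    HasSum (fun k => (matA p q a)⁻¹ ^ (k + 1) *ᵥ ![x k, y k]) ![X, a / (q - p) * (X - Y) + Z] := by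
  simp only [inv_matA_pow hp hq hpq]
  refine Pi.hasSum.2 (Fin.forall_fin_two.2 ⟨?_, ?_⟩)
  · simpa [Matrix.mulVec, dotProduct, Fin.sum_univ_two] using hX
  · refine (((hX.sub hY).mul_left (a / (q - p))).add hZ).congr_fun fun k => ?_
    simp only [mulVec, dotProduct, Fin.sum_univ_two, of_apply, cons_val', cons_val_fin_one,
      cons_val_zero, cons_val_one, Fin.isValue]
    ring

end matA

-- The sum is `1` both for `y = x` and for `y = 2`: one digit sequence expands `1` in two bases.
theorem hasSum_inv_pow_succ_mul_ite {y : ℝ} (hy : 1 < |y|) (x : ℝ) :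
    HasSum (fun k : ℕ => y⁻¹ ^ (k + 1) * if k = 0 then x + 1 else 1 - x)
      ((1 - x) / (y - 1) + 2 * x / y) := by
  have hy₀ : y ≠ 0 := by rintro rfl; norm_num at hy
  have hy₁ : y - 1 ≠ 0 := by rintro h; rw [sub_eq_zero.1 h] at hy; norm_num at hy
  have hgeom := (hasSum_geometric_of_abs_lt_one (r := y⁻¹) (by
      rw [abs_inv]; exact inv_lt_one_of_one_lt₀ hy)).mul_left ((1 - x) * y⁻¹)
  rw [show (1 - x) * y⁻¹ * (1 - y⁻¹)⁻¹ = (1 - x) / (y - 1) by field_simp] at hgeom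
  refine (hgeom.add (hasSum_ite_eq 0 (2 * x / y))).congr_fun fun k => ?_
  split_ifs with hk
  · subst hk
    simp only [zero_add, pow_one, pow_zero, mul_one]
    field_simp
    ring
  · ring

def digitsOfOne (p s : ℤ) (k : ℕ) : ℤ := s ^ (k + 1) * if k = 0 then s * p + 1 else 1 - s * p

section digitsOfOne

variable {p s : ℤ}

theorem abs_digitsOfOne_le (hs : s = 1 ∨ s = -1) (k : ℕ) : |digitsOfOne p s k| ≤ |p| + 1 := by
  have hs' : |s| = 1 := by rcases hs with rfl | rfl <;> rfl
  rw [digitsOfOne, abs_mul, abs_pow, hs', one_pow, one_mul]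
  split_ifs
  · exact (abs_add_le _ _).trans (by rw [abs_mul, hs', one_mul, abs_one])
  · exact (abs_sub _ _).trans (by rw [abs_mul, hs', one_mul, abs_one, add_comm])

theorem hasSum_digitsOfOne_base_self (hs : s = 1 ∨ s = -1) (hp : 2 ≤ |p|) :
    HasSum (fun k => (p : ℝ)⁻¹ ^ (k + 1) * digitsOfOne p s k) 1 := by
  have hss : (s : ℝ) * s = 1 := by rcases hs with rfl | rfl <;> norm_num
  have hsp : 2 ≤ |(s * p : ℝ)| := by
    rcases hs with rfl | rfl <;> simpa using (by exact_mod_cast hp : (2 : ℝ) ≤ |(p : ℝ)|)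
  have hsp₀ : (s * p : ℝ) ≠ 0 := by rintro h; rw [h] at hsp; norm_num at hsp
  have hsp₁ : (s * p : ℝ) - 1 ≠ 0 := by
    rintro h; rw [sub_eq_zero.1 h] at hsp; norm_num at hsp
  have hval : (1 - s * p : ℝ) / (s * p - 1) + 2 * (s * p) / (s * p) = 1 := by
    rw [← neg_sub, neg_div, div_self hsp₁, mul_div_assoc, div_self hsp₀]; norm_num
  have h := hasSum_inv_pow_succ_mul_ite (by linarith) (s * p : ℝ)
  rw [hval] at h
  refine h.congr_fun fun k => ?_
  rw [digitsOfOne, mul_inv, inv_eq_of_mul_eq_one_right hss]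
  push_cast
  ring

theorem hasSum_digitsOfOne_base_two_mul (hs : s = 1 ∨ s = -1) :
    HasSum (fun k => ((2 * s : ℤ) : ℝ)⁻¹ ^ (k + 1) * digitsOfOne p s k) 1 := by
  have hss : (s : ℝ) * s = 1 := by rcases hs with rfl | rfl <;> norm_num
  have h := hasSum_inv_pow_succ_mul_ite (y := 2) (by norm_num) (s * p : ℝ)
  rw [show (1 - s * p : ℝ) / (2 - 1) + 2 * (s * p) / 2 = 1 by ring] at h
  refine h.congr_fun fun k => ?_
  rw [digitsOfOne]
  push_cast
  rw [mul_inv, inv_eq_of_mul_eq_one_right hss]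
  have hpow : (s : ℝ) ^ (k + 1) * s ^ (k + 1) = 1 := by rw [← mul_pow, hss, one_pow]
  linear_combination (2⁻¹ ^ (k + 1) * if k = 0 then (s * p : ℝ) + 1 else 1 - s * p) * hpow

end digitsOfOne

theorem reflTransGen_of_forall_sub_eq {E : Type*} [AddGroup E] {D S : Set E} {e : E}
    (he : e ∈ S) (he' : -e ∈ S) {f : ℤ → E} (hf : ∀ t, f (t + 1) - f t = e) {l u : ℤ}
    (hD : ∀ t, l ≤ t → t ≤ u → f t ∈ D) {t t' : ℤ} (ht : l ≤ t ∧ t ≤ u) (ht' : l ≤ t' ∧ t' ≤ u) :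
    ReflTransGen (fun d d' => d' ∈ D ∧ d' - d ∈ S) (f t) (f t') := by
  refine ReflTransGen.lift f (fun _ _ h => h) _ _
    (reflTransGen_of_succ _ (fun i hi => ?_) fun i hi => ?_) <;>
  simp only [Function.onFun, Order.succ_eq_add_one]
  · rw [hf]
    exact ⟨hD _ (by linarith [hi.1]) (by linarith [hi.2]), he⟩
  · rw [← neg_sub, hf]
    exact ⟨hD _ (by linarith [hi.1]) (by linarith [hi.2]), he'⟩

section digitSet

variable {m n : ℤ}

theorem digitSet_finite : (digitSet m n).Finite := by
  refine (((finite_Icc 0 (m - 1)).prod (finite_Icc 0 (n - 1))).image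
    fun ij : ℤ × ℤ => ![(ij.1 : ℝ), (ij.2 : ℝ)]).subset ?_
  rintro v ⟨i, j, h1, h2, h3, h4, rfl⟩
  exact ⟨(i, j), ⟨⟨h1, h2⟩, ⟨h3, h4⟩⟩, rfl⟩

theorem digitSet_nonempty (hm : 1 ≤ m) (hn : 1 ≤ n) : (digitSet m n).Nonempty :=
  ⟨_, 0, 0, le_rfl, by omega, le_rfl, by omega, rfl⟩

theorem vec_mem_digitSet_sub {i j : ℤ} (hi : |i| ≤ m - 1) (hj : |j| ≤ n - 1) :
    ![(i : ℝ), (j : ℝ)] ∈ digitSet m n - digitSet m n := by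
  rw [abs_le] at hi hj
  refine mem_sub.2 ⟨_, ⟨max i 0, max j 0, by omega, by omega, by omega, by omega, rfl⟩,
    _, ⟨max (-i) 0, max (-j) 0, by omega, by omega, by omega, by omega, rfl⟩, ?_⟩
  ext k
  fin_cases k <;> simp

theorem reflTransGen_digitSet {S : Set (Fin 2 → ℝ)} (h₁ : ![1, 0] ∈ S) (h₂ : ![0, 1] ∈ S)
    (hneg : ∀ v ∈ S, -v ∈ S) {d d' : Fin 2 → ℝ} (hd : d ∈ digitSet m n)
    (hd' : d' ∈ digitSet m n) :
    ReflTransGen (fun d d' => d' ∈ digitSet m n ∧ d' - d ∈ S) d d' := by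
  obtain ⟨i, j, hi₀, hi, hj₀, hj, rfl⟩ := hd
  obtain ⟨i', j', hi₀', hi', hj₀', hj', rfl⟩ := hd'
  have hrow := reflTransGen_of_forall_sub_eq (D := digitSet m n) h₁ (hneg _ h₁)
    (f := fun t : ℤ => ![(t : ℝ), (j : ℝ)]) (fun t => by ext k; fin_cases k <;> simp)
    (l := 0) (u := m - 1) (fun t h h' => ⟨t, j, h, h', hj₀, hj, rfl⟩) ⟨hi₀, hi⟩ ⟨hi₀', hi'⟩
  have hcol := reflTransGen_of_forall_sub_eq (D := digitSet m n) h₂ (hneg _ h₂)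
    (f := fun t : ℤ => ![(i' : ℝ), (t : ℝ)]) (fun t => by ext k; fin_cases k <;> simp)
    (l := 0) (u := n - 1) (fun t h h' => ⟨i', t, hi₀', hi', h, h', rfl⟩) ⟨hj₀, hj⟩ ⟨hj₀', hj'⟩
  exact hrow.trans hcol

end digitSet

section matADigits

variable {p q s m n : ℤ} {a : ℝ}

theorem mem_selfAffineSet_matA_sub_of_hasSum (hp : 2 ≤ |p|) (hq : 2 ≤ |q|) (hpq : p ≠ q)
    {D : Set (Fin 2 → ℝ)} (hD : Bornology.IsBounded D) {e : ℕ → Fin 2 → ℝ}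
    (he : ∀ k, e k ∈ D - D) {v : Fin 2 → ℝ}
    (hv : HasSum (fun k => (matA p q a)⁻¹ ^ (k + 1) *ᵥ e k) v) :
    v ∈ selfAffineSet (matA p q a) D - selfAffineSet (matA p q a) D :=
  mem_selfAffineSet_sub_of_hasSum (fun k => by positivity)
    ((summable_geometric_of_lt_one (by norm_num) (by norm_num)).mul_left _)
    (norm_inv_matA_pow_mulVec_le hp hq hpq) hD he hv

theorem two_le_abs_two_mul (hs : s = 1 ∨ s = -1) : 2 ≤ |2 * s| := by
  rcases hs with rfl | rfl <;> norm_num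

theorem one_zero_mem_selfAffineSet_sub (hs : s = 1 ∨ s = -1) (hp : 2 ≤ |p|) (hps : p ≠ 2 * s)
    (hm : |p| + 2 ≤ m) (hn : 1 ≤ n) :
    ![1, 0] ∈ selfAffineSet (matA p (2 * s) a) (digitSet m n) -
      selfAffineSet (matA p (2 * s) a) (digitSet m n) := by
  have hp₀ : p ≠ 0 := abs_pos.1 (two_pos.trans_le hp)
  have hs₀ : 2 * s ≠ 0 := abs_pos.1 (two_pos.trans_le (two_le_abs_two_mul hs))
  have h := hasSum_inv_matA_pow_succ_mulVec (a := a) hp₀ hs₀ hps (y := fun _ => ((0 : ℤ) : ℝ))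
    (Z := 0) (hasSum_digitsOfOne_base_self hs hp) (hasSum_digitsOfOne_base_two_mul hs) (by simp)
  rw [sub_self, mul_zero, zero_add] at h
  refine mem_selfAffineSet_matA_sub_of_hasSum hp (two_le_abs_two_mul hs) hps
    digitSet_finite.isBounded (fun k => vec_mem_digitSet_sub ?_ ?_) h
  · linarith [abs_digitsOfOne_le (p := p) hs k]
  · simpa using hn

theorem zero_one_mem_selfAffineSet_sub (hs : s = 1 ∨ s = -1) (hp : 2 ≤ |p|) (hps : p ≠ 2 * s)
    (hm : 1 ≤ m) (hn : 2 ≤ n) :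
    ![0, 1] ∈ selfAffineSet (matA p (2 * s) a) (digitSet m n) -
      selfAffineSet (matA p (2 * s) a) (digitSet m n) := by
  have hp₀ : p ≠ 0 := abs_pos.1 (two_pos.trans_le hp)
  have hs₀ : 2 * s ≠ 0 := abs_pos.1 (two_pos.trans_le (two_le_abs_two_mul hs))
  have hss : (s : ℝ)⁻¹ * s = 1 := by rcases hs with rfl | rfl <;> norm_num
  have hZ : HasSum (fun k => ((2 * s : ℤ) : ℝ)⁻¹ ^ (k + 1) * ((s ^ (k + 1) : ℤ) : ℝ)) 1 := by
    refine (hasSum_geometric_two' 1).congr_fun fun k => ?_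
    push_cast
    rw [← mul_pow, mul_inv, mul_assoc, hss, mul_one, pow_succ, inv_pow]
    ring
  have h := hasSum_inv_matA_pow_succ_mulVec (a := a) hp₀ hs₀ hps (x := fun _ => ((0 : ℤ) : ℝ))
    (X := 0) (Y := 0) (by simp) (by simp) hZ
  rw [sub_self, mul_zero, zero_add] at h
  refine mem_selfAffineSet_matA_sub_of_hasSum hp (two_le_abs_two_mul hs) hps
    digitSet_finite.isBounded (fun k => vec_mem_digitSet_sub ?_ ?_) h
  · simpa using hm
  · rcases hs with rfl | rfl <;>
      simp only [one_pow, Int.reduceNeg, abs_pow, abs_neg, abs_one] <;> omega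

end matADigits

theorem stmt_0 (p q m n : ℤ) (a : ℝ) (hp : 2 ≤ |p|) (hq : |q| = 2)
    (hm1 : |p| + 1 < m) (hm2 : m < 2 * |p| - 1) (hn : |q| ≤ 2 * n - 1) :
    IsConnected (selfAffineSet (matA p q a) (digitSet m n)) := by
  obtain ⟨s, rfl, hs⟩ : ∃ s, q = 2 * s ∧ (s = 1 ∨ s = -1) := by
    rcases (abs_eq (by norm_num)).1 hq with rfl | rfl
    exacts [⟨1, rfl, .inl rfl⟩, ⟨-1, rfl, .inr rfl⟩]
  rw [hq] at hn
  -- `|p| + 2 ≤ m ≤ 2|p| - 2` forces `|p| ≥ 4`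
  have hps : p ≠ 2 * s := by rintro rfl; omega
  refine isConnected_selfAffineSet (isUnit_det_matA (abs_pos.1 (by omega)) (abs_pos.1 (by omega)))
    (fun k => by positivity) ((summable_geometric_of_lt_one (by norm_num) (by norm_num)).mul_left _)
    (norm_inv_matA_pow_mulVec_le hp (two_le_abs_two_mul hs) hps) digitSet_finite
    (digitSet_nonempty (by omega) (by omega)) fun d hd d' hd' => reflTransGen_digitSet
      (one_zero_mem_selfAffineSet_sub hs hp hps (by omega) (by omega))
      (zero_one_mem_selfAffineSet_sub hs hp hps (by omega) (by omega)) ?_ hd hd'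
  rintro _ ⟨x, hx, y, hy, rfl⟩
  exact mem_sub.2 ⟨y, hy, x, hx, (neg_sub x y).symm⟩
end

section
/- Let p, q, m be integers with p ≥ q ≥ 2 and p + 1 < m < 2p − 1. Then the set 𝒮 has maximum (p−1)/(q−1) and minimum (pq + q − 2p)/(q(q−1)); that is, both values lie in 𝒮, every element x of 𝒮 satisfies (pq + q − 2p)/(q(q−1)) ≤ x ≤ (p−1)/(q−1). -/
/-- The set `𝒜` of integer sequences `(a_k)_{k≥1}` (indexed here by `k : ℕ`, so `a k`
stands for `a_{k+1}`) with `|a_k| ≤ m - 1` and `∑_{k≥1} a_k p^{-k} = 1`. -/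
def seqA (p m : ℤ) : Set (ℕ → ℤ) :=
  {a | (∀ k, |a k| ≤ m - 1) ∧ HasSum (fun k => (a k : ℝ) * ((p : ℝ)⁻¹) ^ (k + 1)) 1}

/-- The set `ℬ` of integer sequences `(b_k)_{k≥1}` with `|b_k| ≤ m - 1` and
`∑_{k≥1} b_k p^{-k} = 0`. -/
def seqB (p m : ℤ) : Set (ℕ → ℤ) :=
  {b | (∀ k, |b k| ≤ m - 1) ∧ HasSum (fun k => (b k : ℝ) * ((p : ℝ)⁻¹) ^ (k + 1)) 0}

/-- `𝒮 = { ∑_{k≥1} a_k q^{-k} : (a_k) ∈ 𝒜 }`. -/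
def setS (p q m : ℤ) : Set ℝ :=
  {x | ∃ a ∈ seqA p m, HasSum (fun k => (a k : ℝ) * ((q : ℝ)⁻¹) ^ (k + 1)) x}

/-- `𝒮' = { ∑_{k≥1} k a_k p^{-k} : (a_k) ∈ 𝒜 }`. -/
def setS' (p m : ℤ) : Set ℝ :=
  {x | ∃ a ∈ seqA p m,
    HasSum (fun k => ((k + 1 : ℕ) : ℝ) * (a k : ℝ) * ((p : ℝ)⁻¹) ^ (k + 1)) x}

/-- `𝒬 = { ∑_{k≥1} b_k q^{-k} : (b_k) ∈ ℬ }`. -/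
def setQ (p q m : ℤ) : Set ℝ :=
  {x | ∃ b ∈ seqB p m, HasSum (fun k => (b k : ℝ) * ((q : ℝ)⁻¹) ^ (k + 1)) x}

/-- `𝒬' = { ∑_{k≥1} k b_k p^{-k} : (b_k) ∈ ℬ }`. -/
def setQ' (p m : ℤ) : Set ℝ :=
  {x | ∃ b ∈ seqB p m,
    HasSum (fun k => ((k + 1 : ℕ) : ℝ) * (b k : ℝ) * ((p : ℝ)⁻¹) ^ (k + 1)) x}


/-!
Write `s_n = p ^ n * (1 - ∑_{k<n} a_k p^{-(k+1)})` for the carries of a sequence `a ∈ 𝒜`, so that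
`s 0 = 1` and `a_n = p s_n - s_{n+1}`. Since `s_n` is `∑_k a_{n+k} p^{-(k+1)}`, it is an integer of
absolute value at most `(m - 1)/(p - 1) < 2`, hence `s_n ∈ {-1, 0, 1}`. Summation by parts gives
`∑ a_k q^{-(k+1)} = 1 + (p - q) ∑ s_k q^{-(k+1)}`, and as `p ≥ q` this is extremal for
`s = (1, 1, 1, …)` and `s = (1, -1, -1, …)`. Conversely every such carry sequence comes from
digits `|p s_k - s_{k+1}| ≤ p + 1 ≤ m - 1`, so both extremes are attained.
-/

lemma hasSum_inv_pow_succ {r : ℝ} (hr : 1 < r) :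
    HasSum (fun k : ℕ => r⁻¹ ^ (k + 1)) (r - 1)⁻¹ := by
  have h := (hasSum_geometric_of_lt_one (by positivity) (inv_lt_one_of_one_lt₀ hr)).mul_left r⁻¹
  have hr' : r - 1 ≠ 0 := by linarith
  rw [show (r - 1)⁻¹ = r⁻¹ * (1 - r⁻¹)⁻¹ by field_simp]
  simpa only [pow_succ'] using h

lemma summable_mul_inv_pow_succ {s : ℕ → ℝ} {q : ℝ} (hs : ∀ k, |s k| ≤ 1) (hq : 1 < |q|) :
    Summable (fun k => s k * q⁻¹ ^ (k + 1)) := by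
  refine Summable.of_norm_bounded (hasSum_inv_pow_succ hq).summable fun k => ?_
  rw [norm_mul, norm_pow, norm_inv, Real.norm_eq_abs, Real.norm_eq_abs]
  exact mul_le_of_le_one_left (by positivity) (hs k)

lemma hasSum_sub_shift_mul_inv_pow_succ {s : ℕ → ℝ} {q U : ℝ} (p : ℝ) (hq : q ≠ 0)
    (hU : HasSum (fun k => s k * q⁻¹ ^ (k + 1)) U) :
    HasSum (fun k => (p * s k - s (k + 1)) * q⁻¹ ^ (k + 1)) (s 0 + (p - q) * U) := by
  have hqq : q * q⁻¹ = 1 := mul_inv_cancel₀ hq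
  have h := (hU.mul_left p).sub (((hasSum_nat_add_iff' 1).mpr hU).mul_left q)
  rw [Finset.sum_range_one] at h
  rw [show s 0 + (p - q) * U = p * U - q * (U - s 0 * q⁻¹ ^ (0 + 1)) by
    linear_combination -s 0 * hqq]
  exact h.congr_fun fun k => by linear_combination s (k + 1) * q⁻¹ ^ (k + 1) * hqq

def carry (p : ℤ) (a : ℕ → ℤ) : ℕ → ℤ
  | 0 => 1
  | n + 1 => p * carry p a n - a n

lemma eq_mul_carry_sub_carry_succ (p : ℤ) (a : ℕ → ℤ) (n : ℕ) :
    a n = p * carry p a n - carry p a (n + 1) := by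
  simp [carry]

lemma hasSum_carry {p : ℤ} {a : ℕ → ℤ} (hp : p ≠ 0)
    (ha : HasSum (fun k => (a k : ℝ) * (p : ℝ)⁻¹ ^ (k + 1)) 1) (n : ℕ) :
    HasSum (fun k => (a (k + n) : ℝ) * (p : ℝ)⁻¹ ^ (k + 1)) (carry p a n) := by
  induction n with
  | zero => simpa [carry] using ha
  | succ n ih =>
    have hpp : (p : ℝ) * (p : ℝ)⁻¹ = 1 := mul_inv_cancel₀ (by exact_mod_cast hp)
    have h := ((hasSum_nat_add_iff' 1).mpr ih).mul_left (p : ℝ)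
    rw [Finset.sum_range_one, zero_add] at h
    rw [show ((carry p a (n + 1) : ℤ) : ℝ) = p * (carry p a n - a n * (p : ℝ)⁻¹ ^ (0 + 1)) by
      simp only [carry]; push_cast; linear_combination (a n : ℝ) * hpp]
    refine h.congr_fun fun k => ?_
    rw [show k + (n + 1) = k + 1 + n by omega]
    linear_combination -(a (k + 1 + n) : ℝ) * (p : ℝ)⁻¹ ^ (k + 1) * hpp

lemma abs_carry_le_one {p m : ℤ} {a : ℕ → ℤ} (hp : 1 < p) (hm : m < 2 * p - 1)
    (ha : a ∈ seqA p m) (n : ℕ) : |carry p a n| ≤ 1 := by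
  have hp' : (1 : ℝ) < p := by exact_mod_cast hp
  have hbound : |(carry p a n : ℝ)| ≤ (m - 1) * ((p : ℝ) - 1)⁻¹ := by
    refine (hasSum_carry (by omega) ha.2 n).norm_le_of_bounded
      ((hasSum_inv_pow_succ hp').mul_left _) fun k => ?_
    rw [norm_mul, norm_pow, norm_inv, Real.norm_eq_abs, Real.norm_eq_abs,
      abs_of_pos (by linarith : (0 : ℝ) < p)]
    gcongr
    exact_mod_cast ha.1 (k + n)
  have hlt : (m - 1) * ((p : ℝ) - 1)⁻¹ < 2 := by
    rw [← div_eq_mul_inv, div_lt_iff₀ (by linarith)]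
    have : (m : ℝ) < 2 * p - 1 := by exact_mod_cast hm
    linarith
  have : |carry p a n| < 2 := by exact_mod_cast hbound.trans_lt hlt
  omega

lemma exists_carries_of_mem_setS {p q m : ℤ} {x : ℝ} (hp : 1 < p) (hq : 1 < |q|)
    (hm : m < 2 * p - 1) (hx : x ∈ setS p q m) :
    ∃ s : ℕ → ℤ, s 0 = 1 ∧ (∀ k, |s k| ≤ 1) ∧
      ∃ U, HasSum (fun k => (s k : ℝ) * (q : ℝ)⁻¹ ^ (k + 1)) U ∧ x = 1 + (p - q) * U := by
  obtain ⟨a, ha, hax⟩ := hx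
  have hs : ∀ k, |(carry p a k : ℝ)| ≤ 1 := fun k => by
    exact_mod_cast abs_carry_le_one hp hm ha k
  have hqR : (1 : ℝ) < |(q : ℝ)| := by exact_mod_cast hq
  obtain ⟨U, hU⟩ := summable_mul_inv_pow_succ hs hqR
  refine ⟨carry p a, rfl, abs_carry_le_one hp hm ha, U, hU, hax.unique ?_⟩
  have hq0 : (q : ℝ) ≠ 0 := by rintro h; norm_num [h] at hqR
  convert hasSum_sub_shift_mul_inv_pow_succ (p : ℝ) hq0 hU using 3 with k
  · exact_mod_cast eq_mul_carry_sub_carry_succ p a k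
  · simp [carry]

lemma mem_setS_of_carries {p q m : ℤ} {s : ℕ → ℤ} {U : ℝ} (hp : 1 < p) (hq : q ≠ 0)
    (hm : p + 1 < m) (hs0 : s 0 = 1) (hs : ∀ k, |s k| ≤ 1)
    (hU : HasSum (fun k => (s k : ℝ) * (q : ℝ)⁻¹ ^ (k + 1)) U) :
    1 + (p - q) * U ∈ setS p q m := by
  have hsR : ∀ k, |(s k : ℝ)| ≤ 1 := fun k => by exact_mod_cast hs k
  have hpR : (1 : ℝ) < p := by exact_mod_cast hp
  obtain ⟨V, hV⟩ := summable_mul_inv_pow_succ hsR (hpR.trans_le (le_abs_self _))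
  refine ⟨fun k => p * s k - s (k + 1), ⟨fun k => ?_, ?_⟩, ?_⟩
  · calc |p * s k - s (k + 1)| ≤ |p * s k| + |s (k + 1)| := abs_sub _ _
      _ = p * |s k| + |s (k + 1)| := by rw [abs_mul, abs_of_pos (by omega)]
      _ ≤ p * 1 + 1 := by gcongr <;> exact hs _
      _ ≤ m - 1 := by omega
  · simpa [hs0] using hasSum_sub_shift_mul_inv_pow_succ (p : ℝ) (by positivity) hV
  · simpa [hs0] using hasSum_sub_shift_mul_inv_pow_succ (p : ℝ) (by exact_mod_cast hq) hU

lemma hasSum_one_neg_one_mul_inv_pow_succ {q : ℝ} (hq : 1 < q) :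
    HasSum (fun k : ℕ => ((if k = 0 then 1 else -1 : ℤ) : ℝ) * q⁻¹ ^ (k + 1))
      ((q - 2) / (q * (q - 1))) := by
  have hq1 : q - 1 ≠ 0 := by linarith
  rw [show (q - 2) / (q * (q - 1)) = 2 * q⁻¹ - (q - 1)⁻¹ by field_simp; ring]
  refine ((hasSum_ite_eq 0 (2 * q⁻¹)).sub (hasSum_inv_pow_succ hq)).congr_fun fun k => ?_
  rcases k with _ | k <;> simp
  ring

lemma mem_Icc_of_hasSum_carries {q U : ℝ} {s : ℕ → ℤ} (hq : 1 < q) (hs0 : s 0 = 1)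
    (hs : ∀ k, |s k| ≤ 1) (hU : HasSum (fun k => (s k : ℝ) * q⁻¹ ^ (k + 1)) U) :
    U ∈ Set.Icc ((q - 2) / (q * (q - 1))) (q - 1)⁻¹ := by
  constructor
  · refine hasSum_le (fun k => ?_) (hasSum_one_neg_one_mul_inv_pow_succ hq) hU
    gcongr
    split_ifs with hk
    · simp [hk, hs0]
    · exact_mod_cast (abs_le.mp (hs k)).1
  · refine hasSum_le (fun k => ?_) hU (hasSum_inv_pow_succ hq)
    have hsk : (s k : ℝ) ≤ 1 := by exact_mod_cast (abs_le.mp (hs k)).2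
    exact mul_le_of_le_one_left (by positivity) hsk

theorem stmt_3 (p q m : ℤ) (hq : 2 ≤ q) (hpq : q ≤ p)
    (hm1 : p + 1 < m) (hm2 : m < 2 * p - 1) :
    ((p : ℝ) - 1) / ((q : ℝ) - 1) ∈ setS p q m ∧
    ((p : ℝ) * q + q - 2 * p) / ((q : ℝ) * ((q : ℝ) - 1)) ∈ setS p q m ∧
    ∀ x ∈ setS p q m,
      ((p : ℝ) * q + q - 2 * p) / ((q : ℝ) * ((q : ℝ) - 1)) ≤ x ∧
      x ≤ ((p : ℝ) - 1) / ((q : ℝ) - 1) := by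
  have hp : 1 < p := by omega
  have hqR : (1 : ℝ) < q := by exact_mod_cast (by omega : 1 < q)
  have hq1 : (q : ℝ) - 1 ≠ 0 := by linarith
  have hmax : ((p : ℝ) - 1) / (q - 1) = 1 + (p - q) * ((q : ℝ) - 1)⁻¹ := by field_simp; ring
  have hmin : ((p : ℝ) * q + q - 2 * p) / (q * (q - 1)) =
      1 + (p - q) * ((q - 2) / (q * (q - 1))) := by field_simp; ring
  refine ⟨?_, ?_, fun x hx => ?_⟩
  · rw [hmax]
    exact mem_setS_of_carries (s := fun _ => 1) hp (by omega) hm1 rfl (by simp)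
      (by simpa using hasSum_inv_pow_succ hqR)
  · rw [hmin]
    exact mem_setS_of_carries hp (by omega) hm1 rfl (fun k => by split_ifs <;> simp)
      (hasSum_one_neg_one_mul_inv_pow_succ hqR)
  · obtain ⟨s, hs0, hs, U, hU, rfl⟩ :=
      exists_carries_of_mem_setS hp (by rw [abs_of_pos] <;> omega) hm2 hx
    obtain ⟨hlo, hhi⟩ := mem_Icc_of_hasSum_carries hqR hs0 hs hU
    have hpq' : (0 : ℝ) ≤ p - q := by rw [sub_nonneg]; exact_mod_cast hpq
    rw [hmin, hmax]
    constructor <;> gcongr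
end

section
/- Let p, q, m be integers with 2 ≤ p < q and p + 1 < m < 2p − 1. Then the set 𝒮 has maximum (pq + q − 2p)/(q(q−1)) and minimum (p−1)/(q−1); that is, both values lie in 𝒮, and every element x of 𝒮 satisfies (p−1)/(q−1) ≤ x ≤ (pq + q − 2p)/(q(q−1)). -/
open Finset

lemma hasSum_mul_inv_pow_succ {b : ℝ} (hb : 1 < b) (c : ℝ) :
    HasSum (fun k : ℕ => c * b⁻¹ ^ (k + 1)) (c / (b - 1)) := by
  have hb1 : b⁻¹ < 1 := inv_lt_one_of_one_lt₀ hb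
  have hterm : (fun k : ℕ => c * b⁻¹ ^ (k + 1)) = fun k => c * b⁻¹ * b⁻¹ ^ k := by
    ext k; ring
  have hval : c / (b - 1) = c * b⁻¹ * (1 - b⁻¹)⁻¹ := by
    have : 1 - b⁻¹ ≠ 0 := (sub_pos.2 hb1).ne'
    have : b - 1 ≠ 0 := (sub_pos.2 hb).ne'
    field_simp
  rw [hterm, hval]
  exact (hasSum_geometric_of_lt_one (by positivity) hb1).mul_left (c * b⁻¹)

lemma sum_range_mul_nonneg_of_antitone {x w : ℕ → ℝ} (hx : ∀ n, 0 ≤ ∑ k ∈ range n, x k)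
    (hw : Antitone w) (hw0 : ∀ n, 0 ≤ w n) (n : ℕ) : 0 ≤ ∑ k ∈ range n, x k * w k := by
  -- Abel summation, in the form of an induction on `∑_{k<n} x_k w_k ≥ (∑_{k<n} x_k) w_n`
  have key : ∀ n, (∑ k ∈ range n, x k) * w n ≤ ∑ k ∈ range n, x k * w k := by
    intro n
    induction n with
    | zero => simp
    | succ n ih =>
      rw [sum_range_succ, sum_range_succ]
      calc (∑ k ∈ range n, x k + x n) * w (n + 1)
          ≤ (∑ k ∈ range n, x k + x n) * w n := by
            rw [← sum_range_succ]; exact mul_le_mul_of_nonneg_left (hw n.le_succ) (hx _)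
        _ ≤ _ := by linarith
  exact (mul_nonneg (hx n) (hw0 n)).trans (key n)

section Expansion

variable {p : ℤ}

lemma exists_int_sum_range_mul_inv_pow_mul_pow (hp : p ≠ 0) (c : ℕ → ℤ) (n : ℕ) :
    ∃ z : ℤ, (∑ k ∈ range n, (c k : ℝ) * (p : ℝ)⁻¹ ^ (k + 1)) * (p : ℝ) ^ n = z := by
  have hpR : (p : ℝ) ≠ 0 := by exact_mod_cast hp
  refine ⟨∑ k ∈ range n, c k * p ^ (n - (k + 1)), ?_⟩
  push_cast
  rw [sum_mul]
  refine sum_congr rfl fun k hk => ?_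
  obtain ⟨j, rfl⟩ := Nat.exists_eq_add_of_lt (mem_range.1 hk)
  rw [show k + j + 1 - (k + 1) = j by omega, show k + j + 1 = k + 1 + j by omega, pow_add, inv_pow]
  field_simp
  ring

lemma sum_range_nonneg_of_hasSum_zero (hp : 2 ≤ p) {c : ℕ → ℤ} (hc : ∀ k, 1 ≤ k → c k ≤ p - 2)
    (h0 : HasSum (fun k => (c k : ℝ) * (p : ℝ)⁻¹ ^ (k + 1)) 0) (n : ℕ) :
    0 ≤ ∑ k ∈ range n, (c k : ℝ) * (p : ℝ)⁻¹ ^ (k + 1) := by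
  rcases Nat.eq_zero_or_pos n with rfl | hn
  · simp
  have hp1 : (1 : ℝ) < p := by exact_mod_cast hp
  have hp0 : (0 : ℝ) < p := by linarith
  set r : ℝ := (p : ℝ)⁻¹
  set s := ∑ k ∈ range n, (c k : ℝ) * r ^ (k + 1)
  have htail := (hasSum_nat_add_iff' n).2 h0
  have hgeom := hasSum_mul_inv_pow_succ hp1 (((p : ℝ) - 2) * r ^ n)
  -- the tail after `n` is at most `(p - 2) r^n / (p - 1) < r^n`, so `s p^n > -1`
  have htail_le : 0 - s ≤ ((p : ℝ) - 2) * r ^ n / (p - 1) := by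
    refine hasSum_le (fun k => ?_) htail hgeom
    have hck : (c (k + n) : ℝ) ≤ p - 2 := by exact_mod_cast hc (k + n) (by omega)
    calc (c (k + n) : ℝ) * r ^ (k + n + 1) ≤ ((p : ℝ) - 2) * r ^ (k + n + 1) :=
          mul_le_mul_of_nonneg_right hck (by positivity)
      _ = _ := by ring
  have hrn : r ^ n * (p : ℝ) ^ n = 1 := by rw [← mul_pow, inv_mul_cancel₀ hp0.ne', one_pow]
  have hs_gt : -1 < s * (p : ℝ) ^ n := by
    have : ((p : ℝ) - 2) * r ^ n / (p - 1) < r ^ n := by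
      rw [div_lt_iff₀ (by linarith)]; nlinarith [pow_pos (inv_pos.2 hp0) n]
    nlinarith [pow_pos hp0 n, hrn]
  obtain ⟨z, hz⟩ := exists_int_sum_range_mul_inv_pow_mul_pow (by omega : p ≠ 0) c n
  have hz0 : (0 : ℝ) ≤ z := by
    rw [hz] at hs_gt
    exact_mod_cast (show (-1 : ℤ) < z by exact_mod_cast hs_gt)
  exact nonneg_of_mul_nonneg_left (hz ▸ hz0) (pow_pos hp0 n)

lemma le_of_hasSum_inv_pow_of_sub_le (hp : 2 ≤ p) {q : ℝ} (hpq : (p : ℝ) ≤ q) {a b : ℕ → ℤ}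
    (hab : ∀ k, 1 ≤ k → a k - b k ≤ p - 2) {x y y' : ℝ}
    (ha : HasSum (fun k => (a k : ℝ) * (p : ℝ)⁻¹ ^ (k + 1)) x)
    (hb : HasSum (fun k => (b k : ℝ) * (p : ℝ)⁻¹ ^ (k + 1)) x)
    (ha' : HasSum (fun k => (a k : ℝ) * q⁻¹ ^ (k + 1)) y)
    (hb' : HasSum (fun k => (b k : ℝ) * q⁻¹ ^ (k + 1)) y') : y' ≤ y := by
  have hp2 : (2 : ℝ) ≤ p := by exact_mod_cast hp
  have hp0 : (0 : ℝ) < p := by linarith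
  have h0 : HasSum (fun k => ((a k - b k : ℤ) : ℝ) * (p : ℝ)⁻¹ ^ (k + 1)) 0 := by
    simpa [sub_mul] using ha.sub hb
  have hdiff : HasSum (fun k => ((a k - b k : ℤ) : ℝ) * q⁻¹ ^ (k + 1)) (y - y') := by
    simpa [sub_mul] using ha'.sub hb'
  set ρ : ℝ := p / q
  have hρ0 : 0 ≤ ρ := div_nonneg hp0.le (hp0.le.trans hpq)
  have hρ1 : ρ ≤ 1 := div_le_one_of_le₀ hpq (by linarith)
  have hpartial : ∀ n, 0 ≤ ∑ k ∈ range n, ((a k - b k : ℤ) : ℝ) * q⁻¹ ^ (k + 1) := by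
    intro n
    have hq : q⁻¹ = (p : ℝ)⁻¹ * ρ := by simp only [ρ]; field_simp
    simp_rw [hq, mul_pow, ← mul_assoc]
    exact sum_range_mul_nonneg_of_antitone (sum_range_nonneg_of_hasSum_zero hp hab h0)
      (fun i j hij => pow_le_pow_of_le_one hρ0 hρ1 (by omega)) (fun k => by positivity) n
  exact sub_nonneg.1 (ge_of_tendsto' hdiff.tendsto_sum_nat hpartial)

end Expansion

lemma sub_one_mem_seqA {p m : ℤ} (hp : 2 ≤ p) (hpm : p ≤ m) : (fun _ => p - 1) ∈ seqA p m := by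
  have hp1 : (1 : ℝ) < p := by exact_mod_cast (by omega : 1 < p)
  refine ⟨fun _ => by simp only [abs_le]; constructor <;> omega, ?_⟩
  convert hasSum_mul_inv_pow_succ hp1 ((p - 1 : ℤ) : ℝ) using 1
  push_cast
  field_simp [(sub_pos.2 hp1).ne']

def maxDigits (p : ℤ) : ℕ → ℤ := fun k => if k = 0 then p + 1 else 1 - p

lemma hasSum_maxDigits (p : ℤ) {b : ℝ} (hb : 1 < b) :
    HasSum (fun k => (maxDigits p k : ℝ) * b⁻¹ ^ (k + 1)) ((p * b + b - 2 * p) / (b * (b - 1))) := by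
  have hfirst : HasSum (fun k : ℕ => if k = 0 then 2 * (p : ℝ) * b⁻¹ else 0) (2 * p / b) := by
    simpa [div_eq_mul_inv] using hasSum_ite_eq 0 (2 * (p : ℝ) * b⁻¹)
  have hval : (p * b + b - 2 * p) / (b * (b - 1)) = (1 - p) / (b - 1) + 2 * p / b := by
    field_simp [(sub_pos.2 hb).ne', (zero_lt_one.trans hb).ne']
    ring
  rw [hval]
  convert (hasSum_mul_inv_pow_succ hb (1 - p)).add hfirst using 1
  ext k
  rcases k with _ | k
  · simp [maxDigits]
    ring
  · simp [maxDigits]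

lemma maxDigits_mem_seqA {p m : ℤ} (hp : 2 ≤ p) (hpm : p + 1 < m) : maxDigits p ∈ seqA p m := by
  have hp1 : (1 : ℝ) < p := by exact_mod_cast (by omega : 1 < p)
  refine ⟨fun k => abs_le.2 ?_, ?_⟩
  · rcases k with _ | k <;> simp only [maxDigits] <;> constructor <;> omega
  · convert hasSum_maxDigits p hp1 using 1
    field_simp [(sub_pos.2 hp1).ne']
    ring

theorem stmt_4 (p q m : ℤ) (hp : 2 ≤ p) (hpq : p < q)
    (hm1 : p + 1 < m) (hm2 : m < 2 * p - 1) :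
    ((p : ℝ) * q + q - 2 * p) / ((q : ℝ) * ((q : ℝ) - 1)) ∈ setS p q m ∧
    ((p : ℝ) - 1) / ((q : ℝ) - 1) ∈ setS p q m ∧
    ∀ x ∈ setS p q m,
      ((p : ℝ) - 1) / ((q : ℝ) - 1) ≤ x ∧
      x ≤ ((p : ℝ) * q + q - 2 * p) / ((q : ℝ) * ((q : ℝ) - 1)) := by
  have hpqR : (p : ℝ) ≤ q := by exact_mod_cast hpq.le
  have hq1 : (1 : ℝ) < q := by exact_mod_cast (by omega : 1 < q)
  have hmin_mem := sub_one_mem_seqA hp (by omega : p ≤ m)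
  have hmax_mem := maxDigits_mem_seqA hp hm1
  have hmin_q : HasSum (fun k => ((p - 1 : ℤ) : ℝ) * (q : ℝ)⁻¹ ^ (k + 1)) ((p - 1) / (q - 1)) := by
    simpa using hasSum_mul_inv_pow_succ hq1 ((p - 1 : ℤ) : ℝ)
  refine ⟨⟨_, hmax_mem, hasSum_maxDigits p hq1⟩, ⟨_, hmin_mem, hmin_q⟩, ?_⟩
  rintro x ⟨a, ⟨ha_abs, ha_p⟩, ha_q⟩
  have ha_le : ∀ k, -(m - 1) ≤ a k ∧ a k ≤ m - 1 := fun k => abs_le.1 (ha_abs k)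
  refine ⟨le_of_hasSum_inv_pow_of_sub_le hp hpqR (fun k _ => ?_) ha_p hmin_mem.2 ha_q hmin_q,
    le_of_hasSum_inv_pow_of_sub_le hp hpqR (fun k hk => ?_) hmax_mem.2 ha_p
      (hasSum_maxDigits p hq1) ha_q⟩
  · have := ha_le k
    omega
  · have := ha_le k
    simp only [maxDigits, if_neg (show k ≠ 0 by omega)]
    omega
end

section
/- Let p, q, m be integers with p ≥ 2, |q| ≥ 2, and p + 1 < m < 2p − 1. Then the set 𝒬 has maximum |p − q|/(|q|(|q|−1)) and minimum −|p − q|/(|q|(|q|−1)); that is, both values lie in 𝒬, and every element x of 𝒬 satisfies |x| ≤ |p − q|/(|q|(|q|−1)). -/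
/-!
Horner's scheme `s₀ = 0`, `sₙ₊₁ = p sₙ + bₙ` inverts `b ↦ (s_{k+1} - p s_k)_k`. For `b ∈ ℬ` the
condition `∑ b_k p^{-k-1} = 0` gives `sₙ = -∑_k b_{k+n} p^{-k-1}`, so the integer `sₙ` satisfies
`|sₙ| ≤ (m - 1)/(p - 1) < 2`, i.e. `|sₙ| ≤ 1`. Summation by parts gives
`∑ b_k q^{-k-1} = (1 - p/q) ∑ s_{k+1} q^{-k-1}`, of absolute value at most
`|p - q|/|q| · 1/(|q| - 1)`. Conversely, when `p + 1 < m`, any integer sequence with `s₀ = 0` and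
`|sₙ| ≤ 1` comes from a sequence in `ℬ`, and `sₙ = ±(sign q)ⁿ` attains the bound.
-/

open Finset

def horner (p : ℤ) (b : ℕ → ℤ) : ℕ → ℤ
  | 0 => 0
  | n + 1 => p * horner p b n + b n

def pDiff (p : ℤ) (s : ℕ → ℤ) (k : ℕ) : ℤ := s (k + 1) - p * s k

@[simp]
theorem pDiff_horner (p : ℤ) (b : ℕ → ℤ) : pDiff p (horner p b) = b := by
  funext k
  simp [pDiff, horner]

theorem abs_le_of_hasSum_of_abs_le_geometric {f : ℕ → ℝ} {t C r : ℝ} (hf : HasSum f t)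
    (hr₀ : 0 ≤ r) (hr₁ : r < 1) (hfC : ∀ k, |f k| ≤ C * r ^ (k + 1)) :
    |t| ≤ C * r / (1 - r) := by
  have hgeom : HasSum (fun k => C * r ^ (k + 1)) (C * r / (1 - r)) := by
    simpa [pow_succ, mul_comm, mul_left_comm, div_eq_mul_inv, mul_assoc] using
      (hasSum_geometric_of_lt_one hr₀ hr₁).mul_left (C * r)
  exact hf.norm_le_of_bounded hgeom hfC

theorem horner_mul_inv_pow {p : ℤ} (hp : p ≠ 0) (b : ℕ → ℤ) (n : ℕ) :
    (horner p b n : ℝ) * ((p : ℝ)⁻¹) ^ n = ∑ k ∈ range n, (b k : ℝ) * ((p : ℝ)⁻¹) ^ (k + 1) := by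
  have hp' : (p : ℝ) ≠ 0 := by exact_mod_cast hp
  induction n with
  | zero => simp [horner]
  | succ n ih =>
    rw [sum_range_succ, ← ih, horner]
    push_cast
    linear_combination ((horner p b n : ℝ) * ((p : ℝ)⁻¹) ^ n) * mul_inv_cancel₀ hp'

theorem hasSum_horner_tail {p : ℤ} (hp : p ≠ 0) {b : ℕ → ℤ}
    (hb : HasSum (fun k => (b k : ℝ) * ((p : ℝ)⁻¹) ^ (k + 1)) 0) (n : ℕ) :
    HasSum (fun k => (b (k + n) : ℝ) * ((p : ℝ)⁻¹) ^ (k + 1)) (-horner p b n) := by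
  have hp' : (p : ℝ) ≠ 0 := by exact_mod_cast hp
  have h := (hasSum_nat_add_iff' n).mpr (hb.mul_right ((p : ℝ) ^ n))
  rw [← sum_mul, ← horner_mul_inv_pow hp, inv_pow, zero_mul, zero_sub,
    inv_mul_cancel_right₀ (pow_ne_zero n hp')] at h
  have hshift : ∀ k, (b (k + n) : ℝ) * ((p : ℝ)⁻¹) ^ (k + n + 1) * (p : ℝ) ^ n
      = (b (k + n) : ℝ) * ((p : ℝ)⁻¹) ^ (k + 1) := fun k => by
    rw [add_right_comm, pow_add, inv_pow _ n]
    field_simp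
  simpa only [hshift] using h

theorem abs_horner_le_one {p m : ℤ} (hp : 2 ≤ p) (hm : m < 2 * p - 1) {b : ℕ → ℤ}
    (hb : b ∈ seqB p m) (n : ℕ) : |horner p b n| ≤ 1 := by
  obtain ⟨hbm, hb0⟩ := hb
  have hp' : (2 : ℝ) ≤ p := by exact_mod_cast hp
  have hbound : |(horner p b n : ℝ)| ≤ ((m : ℝ) - 1) * (p : ℝ)⁻¹ / (1 - (p : ℝ)⁻¹) := by
    rw [← abs_neg]
    refine abs_le_of_hasSum_of_abs_le_geometric (hasSum_horner_tail (by omega) hb0 n)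
      (by positivity) (inv_lt_one_of_one_lt₀ (by linarith)) fun k => ?_
    rw [abs_mul, abs_pow, abs_of_pos (inv_pos.2 (by linarith : (0 : ℝ) < p))]
    gcongr
    exact_mod_cast hbm (k + n)
  have hlt : ((m : ℝ) - 1) * (p : ℝ)⁻¹ / (1 - (p : ℝ)⁻¹) < 2 := by
    have hm' : (m : ℝ) < 2 * p - 1 := by exact_mod_cast hm
    rw [div_lt_iff₀ (by rw [sub_pos]; exact inv_lt_one_of_one_lt₀ (by linarith))]
    field_simp
    linarith
  have : |horner p b n| < 2 := by exact_mod_cast hbound.trans_lt hlt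
  omega

theorem hasSum_pDiff (p : ℤ) {s : ℕ → ℤ} (hs0 : s 0 = 0) {w T : ℝ}
    (hT : HasSum (fun k => (s (k + 1) : ℝ) * w ^ (k + 1)) T) :
    HasSum (fun k => (pDiff p s k : ℝ) * w ^ (k + 1)) ((1 - p * w) * T) := by
  have hT' : HasSum (fun k => (s k : ℝ) * w ^ k) T :=
    (hasSum_nat_add_iff' 1).mp (by simpa [hs0] using hT)
  rw [sub_mul, one_mul]
  refine (hT.sub (hT'.mul_left (p * w))).congr_fun fun k => ?_
  simp only [pDiff, Int.cast_sub, Int.cast_mul, pow_succ]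
  ring

theorem exists_hasSum_of_abs_le_one {s : ℕ → ℤ} (hs : ∀ n, |s n| ≤ 1) {w : ℝ} (hw : |w| < 1) :
    ∃ T, HasSum (fun k => (s (k + 1) : ℝ) * w ^ (k + 1)) T ∧ |T| ≤ |w| / (1 - |w|) := by
  have hle : ∀ k, |(s (k + 1) : ℝ) * w ^ (k + 1)| ≤ 1 * |w| ^ (k + 1) := fun k => by
    rw [abs_mul, abs_pow]
    gcongr
    exact_mod_cast hs (k + 1)
  have hsum : Summable fun k => (s (k + 1) : ℝ) * w ^ (k + 1) :=
    .of_norm_bounded ((summable_geometric_of_lt_one (abs_nonneg w) hw).mul_left |w|)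
      fun k => by simpa [pow_succ, mul_comm] using hle k
  refine ⟨_, hsum.hasSum, ?_⟩
  simpa using abs_le_of_hasSum_of_abs_le_geometric hsum.hasSum (abs_nonneg w) hw hle

theorem pDiff_mem_seqB {p m : ℤ} (hp : 2 ≤ p) (hm : p + 1 < m) {s : ℕ → ℤ} (hs0 : s 0 = 0)
    (hs : ∀ n, |s n| ≤ 1) : pDiff p s ∈ seqB p m := by
  have hp' : (2 : ℝ) ≤ p := by exact_mod_cast hp
  refine ⟨fun k => ?_, ?_⟩
  · have h1 := abs_le.1 (hs (k + 1))
    have h2 := abs_le.1 (hs k)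
    rw [pDiff, abs_le]
    constructor <;> nlinarith
  · have hw : |(p : ℝ)⁻¹| < 1 := by
      rw [abs_inv, abs_of_pos (by linarith)]
      exact inv_lt_one_of_one_lt₀ (by linarith)
    obtain ⟨T, hT, -⟩ := exists_hasSum_of_abs_le_one hs hw
    simpa [mul_inv_cancel₀ (by linarith : (p : ℝ) ≠ 0)] using hasSum_pDiff p hs0 hT

theorem abs_le_of_mem_setQ {p q m : ℤ} (hp : 2 ≤ p) (hq : 2 ≤ |q|) (hm : m < 2 * p - 1) {x : ℝ}
    (hx : x ∈ setQ p q m) : |x| ≤ |(p : ℝ) - q| / (|(q : ℝ)| * (|(q : ℝ)| - 1)) := by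
  obtain ⟨b, hb, hbx⟩ := hx
  have hq' : (2 : ℝ) ≤ |(q : ℝ)| := by exact_mod_cast hq
  have hq0 : (q : ℝ) ≠ 0 := by rintro h; simp [h] at hq'; linarith
  have hw : |(q : ℝ)⁻¹| < 1 := by rw [abs_inv]; exact inv_lt_one_of_one_lt₀ (by linarith)
  obtain ⟨T, hT, hTle⟩ := exists_hasSum_of_abs_le_one (abs_horner_le_one hp hm hb) hw
  have hxT : x = (1 - p * (q : ℝ)⁻¹) * T := by
    have h := hasSum_pDiff p (s := horner p b) rfl hT
    rw [pDiff_horner] at h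
    exact hbx.unique h
  have hfactor : |1 - p * (q : ℝ)⁻¹| = |(p : ℝ) - q| / |(q : ℝ)| := by
    rw [← abs_div, abs_sub_comm, sub_div, div_self hq0, div_eq_mul_inv]
  have hTle' : |T| ≤ 1 / (|(q : ℝ)| - 1) := by
    rw [abs_inv] at hTle
    convert hTle using 1
    field_simp
  calc |x| = |(p : ℝ) - q| / |(q : ℝ)| * |T| := by rw [hxT, abs_mul, hfactor]
    _ ≤ |(p : ℝ) - q| / |(q : ℝ)| * (1 / (|(q : ℝ)| - 1)) := by gcongr
    _ = |(p : ℝ) - q| / (|(q : ℝ)| * (|(q : ℝ)| - 1)) := by field_simp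

def signPowSeq (ε σ : ℤ) (n : ℕ) : ℤ := if n = 0 then 0 else ε * σ ^ n

theorem abs_signPowSeq_le_one {ε σ : ℤ} (hε : |ε| = 1) (hσ : |σ| = 1) (n : ℕ) :
    |signPowSeq ε σ n| ≤ 1 := by
  unfold signPowSeq
  split_ifs <;> simp [abs_mul, abs_pow, hε, hσ]

theorem hasSum_signPowSeq {q ε σ : ℤ} (hq : 2 ≤ |q|) (hσ : σ * σ = 1) (hσq : σ * q = |q|) :
    HasSum (fun k => (signPowSeq ε σ (k + 1) : ℝ) * (q : ℝ)⁻¹ ^ (k + 1))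
      (ε / (|(q : ℝ)| - 1)) := by
  have hq' : (2 : ℝ) ≤ |(q : ℝ)| := by exact_mod_cast hq
  have hσq' : (σ : ℝ) * (q : ℝ)⁻¹ = |(q : ℝ)|⁻¹ := by
    have h1 : (σ : ℝ) * σ = 1 := by exact_mod_cast hσ
    have h2 : (σ : ℝ) * q = |(q : ℝ)| := by exact_mod_cast hσq
    rw [← h2, mul_inv, inv_eq_of_mul_eq_one_left h1]
  have hgeom := (hasSum_geometric_of_lt_one (r := |(q : ℝ)|⁻¹) (by positivity)
    (inv_lt_one_of_one_lt₀ (by linarith))).mul_left ((ε : ℝ) * |(q : ℝ)|⁻¹)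
  have hvalue : (ε : ℝ) / (|(q : ℝ)| - 1) = ε * |(q : ℝ)|⁻¹ * (1 - |(q : ℝ)|⁻¹)⁻¹ := by
    have : |(q : ℝ)| - 1 ≠ 0 := by linarith
    field_simp
  rw [hvalue]
  refine hgeom.congr_fun fun k => ?_
  simp only [signPowSeq, Nat.add_one_ne_zero, if_false, Int.cast_mul, Int.cast_pow]
  rw [mul_assoc, ← mul_pow, hσq', pow_succ]
  ring

theorem mem_setQ_of_abs_eq {p q m : ℤ} (hp : 2 ≤ p) (hq : 2 ≤ |q|) (hm : p + 1 < m) {c : ℝ}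
    (hc : |c| = |(p : ℝ) - q|) : c / (|(q : ℝ)| * (|(q : ℝ)| - 1)) ∈ setQ p q m := by
  have hq' : (2 : ℝ) ≤ |(q : ℝ)| := by exact_mod_cast hq
  obtain ⟨σ, hσ, hσq⟩ : ∃ σ : ℤ, |σ| = 1 ∧ σ * q = |q| := by
    rcases abs_choice q with h | h
    · exact ⟨1, by simp, by simp [h]⟩
    · exact ⟨-1, by simp, by simp [h]⟩
  have hσσ : σ * σ = 1 := by rw [← abs_mul_self, abs_mul, hσ, one_mul]
  obtain ⟨ε, hε, hcε⟩ : ∃ ε : ℤ, |ε| = 1 ∧ c = ε * σ * ((q : ℝ) - p) := by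
    have hσ' : |(σ : ℝ)| = 1 := by exact_mod_cast hσ
    rcases abs_eq_abs.1 (hc.trans (by rw [abs_mul, hσ', one_mul, abs_sub_comm]) :
        |c| = |σ * ((q : ℝ) - p)|) with h | h
    · exact ⟨1, by simp, by rw [h]; push_cast; ring⟩
    · exact ⟨-1, by simp, by rw [h]; push_cast; ring⟩
  have hs0 : signPowSeq ε σ 0 = 0 := if_pos rfl
  refine ⟨_, pDiff_mem_seqB hp hm hs0 (abs_signPowSeq_le_one hε hσ), ?_⟩
  convert hasSum_pDiff p hs0 (hasSum_signPowSeq (ε := ε) hq hσσ hσq) using 1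
  have hσσ' : (σ : ℝ) * σ = 1 := by exact_mod_cast hσσ
  have hσq' : (σ : ℝ) * q = |(q : ℝ)| := by exact_mod_cast hσq
  have hq1 : |(q : ℝ)| - 1 ≠ 0 := by linarith
  have hq0 : (q : ℝ) ≠ 0 := by rintro h; simp [h] at hq'; linarith
  have hσ0 : (σ : ℝ) ≠ 0 := left_ne_zero_of_mul_eq_one hσσ'
  rw [hcε, ← hσq']
  field_simp

theorem stmt_7 (p q m : ℤ) (hp : 2 ≤ p) (hq : 2 ≤ |q|)
    (hm1 : p + 1 < m) (hm2 : m < 2 * p - 1) :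
    (|p - q| : ℝ) / ((|q| : ℝ) * ((|q| : ℝ) - 1)) ∈ setQ p q m ∧
    -((|p - q| : ℝ) / ((|q| : ℝ) * ((|q| : ℝ) - 1))) ∈ setQ p q m ∧
    ∀ x ∈ setQ p q m, |x| ≤ (|p - q| : ℝ) / ((|q| : ℝ) * ((|q| : ℝ) - 1)) := by
  refine ⟨mem_setQ_of_abs_eq hp hq hm1 (abs_abs _), ?_,
    fun x hx => abs_le_of_mem_setQ hp hq hm2 hx⟩
  rw [← neg_div]
  exact mem_setQ_of_abs_eq hp hq hm1 (by rw [abs_neg, abs_abs])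
end

section
/- Let p, q, m, n be integers with p ≥ 2, |q| ≥ 2, p + 1 < m < 2p − 1, and n ≥ 1, and let a ∈ ℝ. For i₁, i₂ ∈ {0, …, m−1} and j₁, j₂ ∈ {0, …, n−1}, if S_{i₁,j₁}(T) ∩ S_{i₂,j₂}(T) ≠ ∅, then |i₁ − i₂| ≤ 1. -/
open Matrix

/-- `S_{i,j}(T) = A⁻¹(T + (i, j))`. -/
noncomputable def Sij (A : Matrix (Fin 2) (Fin 2) ℝ) (T : Set (Fin 2 → ℝ)) (i j : ℤ) :
    Set (Fin 2 → ℝ) :=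
  (fun x => A⁻¹.mulVec (x + ![(i : ℝ), (j : ℝ)])) '' T

/-- `G_i(T) = ⋃_{j=0}^{n-1} S_{i,j}(T)`. -/
noncomputable def Gi (A : Matrix (Fin 2) (Fin 2) ℝ) (T : Set (Fin 2 → ℝ)) (n i : ℤ) :
    Set (Fin 2 → ℝ) :=
  ⋃ j ∈ Set.Icc (0 : ℤ) (n - 1), Sij A T i j

open Matrix

lemma matA_inv (p q : ℤ) (a : ℝ) (hp : (p:ℝ) ≠ 0) (hq : (q:ℝ) ≠ 0) :
    (matA p q a)⁻¹ = !![(p:ℝ)⁻¹, 0; a * ((p:ℝ) * q)⁻¹, (q:ℝ)⁻¹] := by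
  apply Matrix.inv_eq_right_inv
  ext i j
  fin_cases i <;> fin_cases j <;>
    simp [matA, Matrix.mul_apply, Fin.sum_univ_two] <;> field_simp <;> ring

lemma pow_entries (M : Matrix (Fin 2) (Fin 2) ℝ) (hM : M 0 1 = 0) (k : ℕ) :
    (M ^ k) 0 0 = (M 0 0) ^ k ∧ (M ^ k) 0 1 = 0 := by
  induction k with
  | zero => simp
  | succ k ih =>
    rw [pow_succ, pow_succ]
    constructor <;>
      simp [Matrix.mul_apply, Fin.sum_univ_two, ih.1, ih.2, hM]

lemma T_coord_bound (p q m n : ℤ) (a : ℝ) (hp : 2 ≤ p) (hq : (q:ℝ) ≠ 0)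
    (hm : 1 ≤ m) (x : Fin 2 → ℝ)
    (hx : x ∈ selfAffineSet (matA p q a) (digitSet m n)) :
    0 ≤ x 0 ∧ x 0 ≤ ((m:ℝ) - 1) * ((p:ℝ) - 1)⁻¹ := by
  obtain ⟨d, hd, hsum⟩ := hx
  have hpR : (2:ℝ) ≤ (p:ℝ) := by exact_mod_cast hp
  have hp0 : (p:ℝ) ≠ 0 := by linarith
  have hr0 : (0:ℝ) ≤ (p:ℝ)⁻¹ := by positivity
  have hr1 : (p:ℝ)⁻¹ < 1 := by
    rw [inv_lt_one_iff₀]; right; linarith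
  -- first coordinate bounds of digits
  have hdig : ∀ k, 0 ≤ d k 0 ∧ d k 0 ≤ (m:ℝ) - 1 := by
    intro k
    obtain ⟨i, j, hi0, hi1, _, _, hv⟩ := hd k
    constructor
    · rw [hv]; simp; exact_mod_cast hi0
    · rw [hv]; simp
      have : (i:ℝ) ≤ (m:ℝ) - 1 := by exact_mod_cast (by linarith : i ≤ m - 1)
      linarith
  -- the first coordinate of each term
  have hAinv01 : (matA p q a)⁻¹ 0 1 = 0 := by
    rw [matA_inv p q a hp0 hq]; simp
  have hAinv00 : (matA p q a)⁻¹ 0 0 = (p:ℝ)⁻¹ := by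
    rw [matA_inv p q a hp0 hq]; simp
  have hterm : ∀ k, (((matA p q a)⁻¹ ^ (k+1)).mulVec (d k)) 0
      = (p:ℝ)⁻¹ ^ (k+1) * d k 0 := by
    intro k
    have h1 := pow_entries ((matA p q a)⁻¹) hAinv01 (k+1)
    rw [hAinv00] at h1
    simp only [Matrix.mulVec, dotProduct, Fin.sum_univ_two]
    rw [h1.1, h1.2]
    ring
  have hsum0 : HasSum (fun k => (p:ℝ)⁻¹ ^ (k+1) * d k 0) (x 0) := by
    have := Pi.hasSum.mp hsum 0
    simpa only [hterm] using this
  constructor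
  · refine hasSum_le (fun k => ?_) hasSum_zero hsum0
    exact mul_nonneg (by positivity) (hdig k).1
  · have hgeo : HasSum (fun k : ℕ => ((m:ℝ)-1) * (p:ℝ)⁻¹ * (p:ℝ)⁻¹ ^ k)
        (((m:ℝ)-1) * (p:ℝ)⁻¹ * (1 - (p:ℝ)⁻¹)⁻¹) :=
      (hasSum_geometric_of_lt_one hr0 hr1).mul_left _
    have hle : x 0 ≤ ((m:ℝ)-1) * (p:ℝ)⁻¹ * (1 - (p:ℝ)⁻¹)⁻¹ := by
      refine hasSum_le (fun k => ?_) hsum0 hgeo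
      have := (hdig k).2
      have hpk : (0:ℝ) ≤ (p:ℝ)⁻¹ ^ k := by positivity
      calc (p:ℝ)⁻¹ ^ (k+1) * d k 0 ≤ (p:ℝ)⁻¹ ^ (k+1) * ((m:ℝ)-1) := by
            apply mul_le_mul_of_nonneg_left this (by positivity)
        _ = ((m:ℝ)-1) * (p:ℝ)⁻¹ * (p:ℝ)⁻¹ ^ k := by ring
    have heq : ((m:ℝ)-1) * (p:ℝ)⁻¹ * (1 - (p:ℝ)⁻¹)⁻¹ = ((m:ℝ)-1) * ((p:ℝ)-1)⁻¹ := by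
      rw [mul_assoc]
      congr 1
      rw [← mul_inv]
      congr 1
      field_simp
    linarith [heq ▸ hle]

theorem stmt_9 (p q m n : ℤ) (a : ℝ) (hp : 2 ≤ p) (hq : 2 ≤ |q|)
    (hm1 : p + 1 < m) (hm2 : m < 2 * p - 1) (hn : 1 ≤ n)
    (i₁ i₂ j₁ j₂ : ℤ)
    (hi₁ : i₁ ∈ Set.Icc (0 : ℤ) (m - 1)) (hi₂ : i₂ ∈ Set.Icc (0 : ℤ) (m - 1))
    (hj₁ : j₁ ∈ Set.Icc (0 : ℤ) (n - 1)) (hj₂ : j₂ ∈ Set.Icc (0 : ℤ) (n - 1))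
    (h : (Sij (matA p q a) (selfAffineSet (matA p q a) (digitSet m n)) i₁ j₁ ∩
          Sij (matA p q a) (selfAffineSet (matA p q a) (digitSet m n)) i₂ j₂).Nonempty) :
    |i₁ - i₂| ≤ 1 := by
  obtain ⟨z, hz1, hz2⟩ := h
  obtain ⟨x, hxT, hxz⟩ := hz1
  obtain ⟨y, hyT, hyz⟩ := hz2
  have hpR : (2:ℝ) ≤ (p:ℝ) := by exact_mod_cast hp
  have hp0 : (p:ℝ) ≠ 0 := by linarith
  have hq0 : (q:ℝ) ≠ 0 := by
    have : q ≠ 0 := by intro h0; rw [h0] at hq; simp at hq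
    exact_mod_cast this
  have hm : (1:ℤ) ≤ m := by linarith
  have hAinv01 : (matA p q a)⁻¹ 0 1 = 0 := by
    rw [matA_inv p q a hp0 hq0]; simp
  have hAinv00 : (matA p q a)⁻¹ 0 0 = (p:ℝ)⁻¹ := by
    rw [matA_inv p q a hp0 hq0]; simp
  have key : ∀ (w : Fin 2 → ℝ) (i j : ℤ),
      ((matA p q a)⁻¹.mulVec (w + ![(i:ℝ), (j:ℝ)])) 0 = (p:ℝ)⁻¹ * (w 0 + i) := by
    intro w i j
    simp only [Matrix.mulVec, dotProduct, Fin.sum_univ_two, hAinv00, hAinv01,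
      Pi.add_apply, Matrix.cons_val_zero, Matrix.cons_val_one, Matrix.head_cons]
    ring
  have hx0 := congrArg (fun v => v 0) hxz
  have hy0 := congrArg (fun v => v 0) hyz
  simp only [key] at hx0 hy0
  have heq : x 0 + (i₁:ℝ) = y 0 + (i₂:ℝ) := by
    have := hx0.trans hy0.symm
    exact mul_left_cancel₀ (inv_ne_zero hp0) this
  obtain ⟨hx0b, hx1b⟩ := T_coord_bound p q m n a hp hq0 hm x hxT
  obtain ⟨hy0b, hy1b⟩ := T_coord_bound p q m n a hp hq0 hm y hyT
  have hpos : (0:ℝ) < (p:ℝ) - 1 := by linarith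
  have hB : ((m:ℝ) - 1) * ((p:ℝ) - 1)⁻¹ < 2 := by
    rw [← div_eq_mul_inv, div_lt_iff₀ hpos]
    have : (m:ℝ) < 2 * (p:ℝ) - 1 := by exact_mod_cast hm2
    linarith
  have habs : |(i₁:ℝ) - (i₂:ℝ)| < 2 := by
    rw [abs_lt]
    constructor <;> nlinarith
  have : |i₁ - i₂| < 2 := by
    have : |((i₁ - i₂ : ℤ) : ℝ)| < 2 := by push_cast; exact habs
    exact_mod_cast (by rwa [← Int.cast_abs] at this : ((|i₁ - i₂| : ℤ) : ℝ) < 2)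
  omega
end

section
/- Let p, q, m, n be integers with |p| ≥ 2, |q| ≥ 2, m, n ≥ 1, mn = |pq|, and m < |p|, and let a ∈ ℝ. Then the self-affine set T(A, D) is not a tile of ℝ²: there is no discrete set J ⊆ ℝ² such that ⋃_{t ∈ J} (T + t) = ℝ² and (T° + t) ∩ (T° + s) = ∅ for all distinct s, t ∈ J, where T° denotes the interior of T. -/
open Matrix

/-- The expanding matrix with rows `(p, 0)` and `(a, q)`. -/
noncomputable def matB (p q : ℤ) (a : ℝ) : Matrix (Fin 2) (Fin 2) ℝ :=
  !![(p : ℝ), 0; a, (q : ℝ)]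

/-- `T` is a tile of `ℝ²`: there is a discrete set `J` whose translates of `T` cover `ℝ²`
with pairwise disjoint interiors. -/
def IsTile (T : Set (Fin 2 → ℝ)) : Prop :=
  ∃ J : Set (Fin 2 → ℝ), DiscreteTopology J ∧
    (⋃ t ∈ J, (fun x => x + t) '' T) = Set.univ ∧
    ∀ s ∈ J, ∀ t ∈ J, s ≠ t →
      ((fun x => x + s) '' interior T) ∩ ((fun x => x + t) '' interior T) = ∅

/-!
Because `A` is lower triangular, the first coordinate of a point of `T` is a radix expansion
`∑ p^{-(k+1)} c_k` with digits `c_k ∈ {0, …, m-1}`. The set of such expansions is covered by `m`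
copies of itself scaled by `|p|⁻¹`, so its (finite) length `λ` satisfies `λ ≤ (m / |p|) λ`, and
`m < |p|` forces `λ = 0`. Hence `T` is Lebesgue-null, while a tiling set `J` is discrete, hence
countable, and countably many null translates cannot cover `ℝ²`.
-/

open MeasureTheory Set Pointwise Metric

def radixSet (r : ℝ) (E : Set ℝ) : Set ℝ :=
  {y | ∃ c : ℕ → ℝ, (∀ k, c k ∈ E) ∧ HasSum (fun k => r⁻¹ ^ (k + 1) * c k) y}

section radixSet

variable {r : ℝ} {E : Set ℝ}

lemma radixSet_subset_closedBall (hr : 1 < |r|) {M : ℝ} (hM : ∀ e ∈ E, |e| ≤ M) :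
    radixSet r E ⊆ closedBall 0 (M * |r|⁻¹ * (1 - |r|⁻¹)⁻¹) := by
  rintro y ⟨c, hc, hy⟩
  have hρ : |r|⁻¹ < 1 := inv_lt_one_of_one_lt₀ hr
  have hgeom : HasSum (fun k => M * |r|⁻¹ * |r|⁻¹ ^ k) (M * |r|⁻¹ * (1 - |r|⁻¹)⁻¹) :=
    (hasSum_geometric_of_lt_one (by positivity) hρ).mul_left _
  rw [mem_closedBall_zero_iff]
  refine hy.norm_le_of_bounded hgeom fun k => ?_
  rw [Real.norm_eq_abs, abs_mul, abs_pow, abs_inv, pow_succ, mul_comm M, mul_assoc, mul_comm]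
  gcongr
  exact hM _ (hc k)

lemma radixSet_subset_iUnion (hr : r ≠ 0) :
    radixSet r E ⊆ ⋃ e ∈ E, r⁻¹ • (e +ᵥ radixSet r E) := by
  rintro y ⟨c, hc, hy⟩
  have htail : HasSum (fun k => r⁻¹ * (r⁻¹ ^ (k + 1) * c (k + 1))) (y - r⁻¹ * c 0) := by
    simpa [pow_succ', mul_assoc] using (hasSum_nat_add_iff' 1).mpr hy
  have hz : HasSum (fun k => r⁻¹ ^ (k + 1) * c (k + 1)) (r * (y - r⁻¹ * c 0)) := by
    simpa [← mul_assoc, mul_inv_cancel₀ hr] using htail.mul_left r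
  refine mem_biUnion (hc 0) ⟨c 0 + r * (y - r⁻¹ * c 0),
    vadd_mem_vadd_set ⟨fun k => c (k + 1), fun k => hc (k + 1), hz⟩, ?_⟩
  simp only [smul_eq_mul]
  field_simp
  ring

lemma volume_radixSet_eq_zero {E : Finset ℝ} (hr : 1 < |r|) (hE : (E.card : ℝ) < |r|) :
    volume (radixSet r E) = 0 := by
  have hr0 : r ≠ 0 := abs_pos.mp (one_pos.trans hr)
  set t := volume (radixSet r E)
  have ht : t ≠ ⊤ := ne_top_of_le_ne_top measure_closedBall_lt_top.ne
    (measure_mono (radixSet_subset_closedBall hr fun e he =>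
      Finset.single_le_sum (f := fun e => |e|) (fun _ _ => abs_nonneg _) he))
  have hC : ENNReal.ofReal (E.card * |r|⁻¹) < 1 := by
    rw [ENNReal.ofReal_lt_one, ← div_eq_mul_inv, div_lt_one (one_pos.trans hr)]
    exact hE
  have hself : t ≤ t * ENNReal.ofReal (E.card * |r|⁻¹) :=
    calc t ≤ ∑ e ∈ E, volume (r⁻¹ • (e +ᵥ radixSet r E)) :=
          (measure_mono (radixSet_subset_iUnion hr0)).trans (measure_biUnion_finset_le _ _)
      _ = t * ENNReal.ofReal (E.card * |r|⁻¹) := by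
        simp only [Measure.addHaar_smul, measure_vadd, Module.finrank_self, pow_one, abs_inv,
          Finset.sum_const, nsmul_eq_mul]
        rw [ENNReal.ofReal_mul (Nat.cast_nonneg _), ENNReal.ofReal_natCast]
        ring
  by_contra ht0
  exact (hself.trans_lt ((ENNReal.mul_lt_mul_right ht0 ht hC).trans_eq (mul_one t))).false

end radixSet

lemma not_isTile_of_volume_eq_zero {T : Set (Fin 2 → ℝ)} (hT : volume T = 0) : ¬ IsTile T := by
  rintro ⟨J, hJ, hcover, -⟩
  have hJc : J.Countable := countable_coe_iff.mp countable_of_Lindelof_of_discrete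
  apply (NeZero.ne (volume : Measure (Fin 2 → ℝ)))
  rw [← Measure.measure_univ_eq_zero, ← hcover]
  refine measure_biUnion_null_iff hJc |>.mpr fun t _ => ?_
  rwa [image_add_right, measure_preimage_add_right]

section matB

variable {p q : ℤ} {a : ℝ}

lemma matB_inv (hp : (p : ℝ) ≠ 0) (hq : (q : ℝ) ≠ 0) :
    (matB p q a)⁻¹ = !![(p : ℝ)⁻¹, 0; -a / (p * q), (q : ℝ)⁻¹] := by
  apply inv_eq_right_inv
  ext i j
  fin_cases i <;> fin_cases j <;>
    simp [matB, Matrix.mul_apply, Fin.sum_univ_two, hp, hq]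
  field_simp
  ring

lemma matB_inv_mulVec_zero (hp : (p : ℝ) ≠ 0) (hq : (q : ℝ) ≠ 0) (v : Fin 2 → ℝ) :
    ((matB p q a)⁻¹ *ᵥ v) 0 = (p : ℝ)⁻¹ * v 0 := by
  simp [matB_inv hp hq, Matrix.mulVec, dotProduct, Fin.sum_univ_two]

lemma matB_inv_pow_mulVec_zero (hp : (p : ℝ) ≠ 0) (hq : (q : ℝ) ≠ 0) (k : ℕ) (v : Fin 2 → ℝ) :
    ((matB p q a)⁻¹ ^ k *ᵥ v) 0 = (p : ℝ)⁻¹ ^ k * v 0 := by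
  induction k with
  | zero => simp
  | succ k ih =>
    rw [pow_succ', ← Matrix.mulVec_mulVec, matB_inv_mulVec_zero hp hq, ih, pow_succ', mul_assoc]

lemma selfAffineSet_matB_subset (hp : (p : ℝ) ≠ 0) (hq : (q : ℝ) ≠ 0) {D : Set (Fin 2 → ℝ)}
    {E : Set ℝ} (hDE : ∀ v ∈ D, v 0 ∈ E) :
    selfAffineSet (matB p q a) D ⊆ Function.eval 0 ⁻¹' radixSet p E := by
  rintro x ⟨d, hd, hx⟩
  refine ⟨fun k => d k 0, fun k => hDE _ (hd k), ?_⟩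
  simpa only [matB_inv_pow_mulVec_zero hp hq] using Pi.hasSum.mp hx 0

end matB

lemma digitSet_apply_zero_mem (m n : ℤ) :
    ∀ v ∈ digitSet m n, v 0 ∈ ((Finset.Icc 0 (m - 1)).image (Int.cast : ℤ → ℝ) : Set ℝ) := by
  rintro _ ⟨i, j, hi0, him, -, -, rfl⟩
  simp only [Finset.coe_image, Finset.coe_Icc]
  exact ⟨i, ⟨hi0, him⟩, rfl⟩

theorem stmt_14_general (p q m n : ℤ) (a : ℝ) (hp : 2 ≤ |p|) (hq : 2 ≤ |q|)
    (hmp : m < |p|) :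
    ¬ IsTile (selfAffineSet (matB p q a) (digitSet m n)) := by
  have hp1 : (1 : ℝ) < |(p : ℝ)| := by rw [← Int.cast_abs]; exact_mod_cast hp
  have hp0 : (p : ℝ) ≠ 0 := abs_pos.mp (one_pos.trans hp1)
  have hq0 : (q : ℝ) ≠ 0 := by rw [Int.cast_ne_zero]; rintro rfl; norm_num at hq
  have hcard : (((Finset.Icc 0 (m - 1)).image (Int.cast : ℤ → ℝ)).card : ℝ) < |(p : ℝ)| := by
    rw [Finset.card_image_of_injective _ Int.cast_injective, Int.card_Icc, ← Int.cast_abs]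
    exact_mod_cast (show ((m - 1 + 1 - 0).toNat : ℤ) < |p| by omega)
  apply not_isTile_of_volume_eq_zero
  refine measure_mono_null (selfAffineSet_matB_subset hp0 hq0 (digitSet_apply_zero_mem m n)) ?_
  exact Measure.pi_eval_preimage_null _ (volume_radixSet_eq_zero hp1 hcard)

theorem stmt_14 (p q m n : ℤ) (a : ℝ) (hp : 2 ≤ |p|) (hq : 2 ≤ |q|)
    (hm : 1 ≤ m) (hn : 1 ≤ n) (hmn : m * n = |p * q|) (hmp : m < |p|) :
    ¬ IsTile (selfAffineSet (matB p q a) (digitSet m n)) :=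
  stmt_14_general p q m n a hp hq hmp
end
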